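/- arXiv:0911.3821 — 8 statements merged into one kernel-verified Lean document; each statement's English description precedes it below -/
import Mathlib

section
/- A weighted shift S_λ on a directed tree is everywhere defined (equivalently, bounded on ℓ²(V)) if and only if sup_{u∈V} Σ_{v∈Chi(u)} |λ_v|² < ∞; in that case its operator norm equals sup_{u∈V} (Σ_{v∈Chi(u)} |λ_v|²)^{1/2}. -/
/-- A directed tree: a nonempty, connected, circuit-free directed graph in which
every vertex with an incoming edge has a unique parent. -/
structure DirectedTree (V : Type) where
  E : V → V → Prop
  nonempty : Nonempty V
  irrefl : ∀ v : V, ¬ E v v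
  connected : ∀ u v : V, Relation.ReflTransGen (fun a b => E a b ∨ E b a) u v
  noCircuit : ∀ v : V, ¬ Relation.TransGen E v v
  parentUnique : ∀ v : V, (∃ u, E u v) → ∃! u, E u v

/-- The set of children of a vertex. -/
def DirectedTree.chi {V : Type} (T : DirectedTree V) (u : V) : Set V := {v | T.E u v}

/-- The children of a set of vertices. -/
def DirectedTree.chiSet {V : Type} (T : DirectedTree V) (W : Set V) : Set V :=
  {v | ∃ u ∈ W, T.E u v}

/-- `chiIter n u` is `Chi^n({u})`, the vertices reachable from `u` by exactly `n` edges. -/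
def DirectedTree.chiIter {V : Type} (T : DirectedTree V) (n : ℕ) (u : V) : Set V :=
  (T.chiSet)^[n] {u}

/-- The descendants of a vertex. -/
def DirectedTree.des {V : Type} (T : DirectedTree V) (u : V) : Set V :=
  ⋃ n : ℕ, T.chiIter n u

/-- A root is a vertex with no incoming edge. -/
def DirectedTree.isRoot {V : Type} (T : DirectedTree V) (v : V) : Prop := ∀ u, ¬ T.E u v
open scoped ENNReal NNReal

open Classical in
/-- The formal weighted shift transform: `(Λ_T f)(v) = λ_v · f(par v)` for a vertex `v` with
a parent, and `(Λ_T f)(v) = 0` if `v` is a root. -/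
noncomputable def lambdaT {V : Type} (T : DirectedTree V) (lam : V → ℂ) (f : V → ℂ) :
    V → ℂ :=
  fun v => if h : ∃ u, T.E u v then lam v * f h.choose else 0

/-- `Σ_{v ∈ Chi(u)} |λ_v|²`, computed in `ℝ≥0∞`. -/
noncomputable def childSum {V : Type} (T : DirectedTree V) (lam : V → ℂ) (u : V) : ℝ≥0∞ :=
  ∑' v : {v : V // T.E u v}, (‖lam (v : V)‖₊ : ℝ≥0∞) ^ 2

/- ### Auxiliary lemmas -/

theorem ws_bridge1 {V : Type} (g : V → ℂ) :
    Memℓp g 2 ↔ (∑' v, (‖g v‖₊ : ℝ≥0∞) ^ 2) ≠ ⊤ := by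
  have h2 : (0:ℝ) < (2:ℝ≥0∞).toReal := by norm_num
  rw [memℓp_gen_iff h2]
  have h : ∀ v, ‖g v‖ ^ (2:ℝ≥0∞).toReal = ((‖g v‖₊ ^ 2 : ℝ≥0) : ℝ) := by
    intro v; simp [ENNReal.toReal_ofNat, Real.rpow_natCast]
  simp_rw [h, NNReal.summable_coe, ← ENNReal.tsum_coe_ne_top_iff_summable, ENNReal.coe_pow]

theorem ws_bridge2 {V : Type} (f : lp (fun _ : V => ℂ) 2) :
    ((‖f‖₊ : ℝ≥0∞)) ^ 2 = ∑' v, (‖f v‖₊ : ℝ≥0∞) ^ 2 := by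
  have h2 : (0:ℝ) < (2:ℝ≥0∞).toReal := by norm_num
  have := lp.norm_rpow_eq_tsum h2 f
  have hs : Summable fun v => ‖f v‖ ^ (2:ℝ≥0∞).toReal := (lp.memℓp f).summable h2
  have h : ∀ v, ‖f v‖ ^ (2:ℝ≥0∞).toReal = ((‖f v‖₊ ^ 2 : ℝ≥0) : ℝ) := by
    intro v; simp [ENNReal.toReal_ofNat, Real.rpow_natCast]
  simp_rw [h, NNReal.summable_coe] at hs
  rw [show ((‖f‖₊:ℝ≥0∞))^2 = ((‖f‖₊^2 : ℝ≥0) : ℝ≥0∞) by push_cast; ring]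
  simp_rw [show ∀ v:V, ((‖(f:∀ _:V, ℂ) v‖₊:ℝ≥0∞))^2 = ((‖(f:∀ _:V, ℂ) v‖₊^2 : ℝ≥0) : ℝ≥0∞)
    from fun v => by push_cast; ring]
  rw [← ENNReal.coe_tsum hs]
  norm_cast
  apply NNReal.coe_injective
  push_cast [NNReal.coe_tsum]
  simp_rw [h] at this
  rw [show ((2:ℝ≥0∞).toReal) = ((2:ℕ):ℝ) by norm_num, Real.rpow_natCast] at this
  push_cast at this ⊢
  exact this

theorem ws_choose_eq {V : Type} (T : DirectedTree V) {u v : V} (h : ∃ u, T.E u v)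
    (hu : T.E u v) : h.choose = u := by
  obtain ⟨w, _, huniq⟩ := T.parentUnique v h
  rw [huniq h.choose h.choose_spec, huniq u hu]

theorem ws_lambdaT_apply {V : Type} (T : DirectedTree V) (lam : V → ℂ) (f : V → ℂ)
    {u v : V} (hu : T.E u v) : lambdaT T lam f v = lam v * f u := by
  have h : ∃ u, T.E u v := ⟨u, hu⟩
  simp only [lambdaT, dif_pos h, ws_choose_eq T h hu]

theorem ws_lambdaT_root {V : Type} (T : DirectedTree V) (lam : V → ℂ) (f : V → ℂ)
    {v : V} (hv : ¬ ∃ u, T.E u v) : lambdaT T lam f v = 0 := by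
  simp only [lambdaT, dif_neg hv]

noncomputable def wsParEquiv {V : Type} (T : DirectedTree V) :
    (Σ u : V, {v : V // T.E u v}) ≃ {v : V // ∃ u, T.E u v} where
  toFun σ := ⟨σ.2.1, ⟨σ.1, σ.2.2⟩⟩
  invFun w := ⟨w.2.choose, ⟨w.1, w.2.choose_spec⟩⟩
  left_inv := by
    rintro ⟨u, v, hv⟩
    have h1 : (⟨u, hv⟩ : ∃ w, T.E w v).choose = u := ws_choose_eq T _ hv
    exact Sigma.subtype_ext h1 rfl
  right_inv := by rintro ⟨v, hv⟩; rfl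

theorem ws_key {V : Type} (T : DirectedTree V) (lam : V → ℂ) (f : V → ℂ) :
    (∑' v, (‖lambdaT T lam f v‖₊ : ℝ≥0∞) ^ 2)
      = ∑' u, childSum T lam u * (‖f u‖₊ : ℝ≥0∞) ^ 2 := by
  set g : V → ℝ≥0∞ := fun v => (‖lambdaT T lam f v‖₊ : ℝ≥0∞) ^ 2 with hg
  calc ∑' v, g v = ∑' (w : {v : V // ∃ u, T.E u v}), g w.1 := by
        refine (tsum_subtype_eq_of_support_subset ?_).symm
        intro v hv
        simp only [Function.mem_support] at hv
        by_contra hmem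
        exact hv (by simp [hg, ws_lambdaT_root T lam f hmem])
    _ = ∑' (σ : Σ u : V, {v : V // T.E u v}), g ((wsParEquiv T σ).1) :=
        ((wsParEquiv T).tsum_eq (fun w : {v : V // ∃ u, T.E u v} => g w.1)).symm
    _ = ∑' (σ : Σ u : V, {v : V // T.E u v}),
          (‖lam (σ.2 : V)‖₊ : ℝ≥0∞) ^ 2 * (‖f σ.1‖₊ : ℝ≥0∞) ^ 2 := by
        refine tsum_congr ?_
        rintro ⟨u, v, hv⟩
        simp only [hg]
        rw [show ((wsParEquiv T ⟨u, ⟨v, hv⟩⟩ : {v : V // ∃ u, T.E u v}) : V) = v from rfl,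
          ws_lambdaT_apply T lam f hv, nnnorm_mul]
        push_cast
        ring
    _ = ∑' u, childSum T lam u * (‖f u‖₊ : ℝ≥0∞) ^ 2 := by
        rw [ENNReal.tsum_sigma (fun u (v : {v : V // T.E u v}) =>
          (‖lam (v:V)‖₊:ℝ≥0∞)^2 * (‖f u‖₊:ℝ≥0∞)^2)]
        refine tsum_congr fun u => ?_
        rw [childSum, ENNReal.tsum_mul_right]

theorem ws_add {V : Type} (T : DirectedTree V) (lam : V → ℂ) (f g : V → ℂ) :
    lambdaT T lam (f + g) = lambdaT T lam f + lambdaT T lam g := by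
  funext v
  by_cases h : ∃ u, T.E u v
  · simp only [lambdaT, dif_pos h, Pi.add_apply]; ring
  · simp only [lambdaT, dif_neg h, Pi.add_apply, add_zero]

theorem ws_smul {V : Type} (T : DirectedTree V) (lam : V → ℂ) (c : ℂ) (f : V → ℂ) :
    lambdaT T lam (c • f) = c • lambdaT T lam f := by
  funext v
  by_cases h : ∃ u, T.E u v
  · simp only [lambdaT, dif_pos h, Pi.smul_apply, smul_eq_mul]; ring
  · simp only [lambdaT, dif_neg h, Pi.smul_apply, smul_eq_mul, mul_zero]

theorem ws_sqrt_sq (a : ℝ≥0∞) : (a ^ 2) ^ (1/2 : ℝ) = a := by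
  rw [← ENNReal.rpow_natCast a 2, ← ENNReal.rpow_mul]
  norm_num

theorem ws_sq_le {a b : ℝ≥0∞} (h : a ^ 2 ≤ b) : a ≤ b ^ (1/2 : ℝ) := by
  rw [← ws_sqrt_sq a]
  exact ENNReal.rpow_le_rpow h (by norm_num)

/-- A weighted shift `S_λ` on a directed tree is everywhere defined iff
`sup_u Σ_{v ∈ Chi(u)} |λ_v|² < ∞`, iff it is (given by) a bounded operator on `ℓ²(V)`;
in that case its norm is `(sup_u Σ_{v ∈ Chi(u)} |λ_v|²)^{1/2}`. -/
theorem stmt_9 {V : Type} (T : DirectedTree V) (lam : V → ℂ) :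
    ((∀ f : lp (fun _ : V => ℂ) 2, Memℓp (lambdaT T lam ⇑f) 2) ↔
      (⨆ u : V, childSum T lam u) ≠ ⊤) ∧
    ((∃ S : lp (fun _ : V => ℂ) 2 →L[ℂ] lp (fun _ : V => ℂ) 2,
        ∀ (f : lp (fun _ : V => ℂ) 2) (v : V), S f v = lambdaT T lam ⇑f v) ↔
      (⨆ u : V, childSum T lam u) ≠ ⊤) ∧
    (∀ S : lp (fun _ : V => ℂ) 2 →L[ℂ] lp (fun _ : V => ℂ) 2,
      (∀ (f : lp (fun _ : V => ℂ) 2) (v : V), S f v = lambdaT T lam ⇑f v) →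
      (‖S‖₊ : ℝ≥0∞) = (⨆ u : V, childSum T lam u) ^ (1 / 2 : ℝ)) := by
  classical
  set C := ⨆ u : V, childSum T lam u with hCdef
  -- the fundamental bound
  have hbound : ∀ f : lp (fun _ : V => ℂ) 2,
      (∑' v, (‖lambdaT T lam ⇑f v‖₊ : ℝ≥0∞) ^ 2) ≤ C * ((‖f‖₊ : ℝ≥0∞)) ^ 2 := by
    intro f
    rw [ws_key, ws_bridge2, ← ENNReal.tsum_mul_left]
    exact ENNReal.tsum_le_tsum fun u => mul_le_mul_left (le_iSup _ u) _
  -- C ≠ ⊤ → everywhere defined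
  have hED : C ≠ ⊤ → ∀ f : lp (fun _ : V => ℂ) 2, Memℓp (lambdaT T lam ⇑f) 2 := by
    intro hC f
    rw [ws_bridge1]
    refine ne_top_of_le_ne_top (ENNReal.mul_ne_top hC ?_) (hbound f)
    exact ENNReal.pow_ne_top ENNReal.coe_ne_top
  -- everywhere defined → C ≠ ⊤
  have hDE : (∀ f : lp (fun _ : V => ℂ) 2, Memℓp (lambdaT T lam ⇑f) 2) → C ≠ ⊤ := by
    intro hall htop
    by_cases hfin : ∀ u : V, childSum T lam u ≠ ⊤
    · -- all columns finite but sup infinite: build a bad ℓ² function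
      have hex : ∀ b : ℝ≥0∞, b ≠ ⊤ → ∃ u, b < childSum T lam u := by
        intro b hb
        have hb' : b < C := by rw [htop]; exact hb.lt_top
        exact lt_iSup_iff.mp hb'
      choose F hF using hex
      set s : ℕ → V := fun n => Nat.rec (F 1 ENNReal.one_ne_top)
        (fun n prev => F (max (childSum T lam prev) ((4:ℝ≥0∞) ^ (n+1)))
          ((max_lt (hfin prev).lt_top
            (ENNReal.pow_ne_top (by norm_num)).lt_top).ne)) n with hs
      have hlt : ∀ n, childSum T lam (s n) < childSum T lam (s (n+1)) := by
        intro n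
        exact lt_of_le_of_lt (le_max_left _ _) (hF _ _)
      have hgt4 : ∀ n, (4:ℝ≥0∞) ^ n < childSum T lam (s n) := by
        intro n
        cases n with
        | zero => rw [pow_zero]; exact hF 1 ENNReal.one_ne_top
        | succ n => exact lt_of_le_of_lt (le_max_right _ _) (hF _ _)
      have hmono : StrictMono fun n => childSum T lam (s n) := strictMono_nat_of_lt_succ hlt
      have hinj : Function.Injective s := fun a b hab => hmono.injective (by simp only [hab])
      set f : V → ℂ := fun v => if h : ∃ n, s n = v then (2:ℂ)⁻¹ ^ h.choose else 0 with hf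
      have hfs : ∀ n, f (s n) = (2:ℂ)⁻¹ ^ n := by
        intro n
        have h : ∃ m, s m = s n := ⟨n, rfl⟩
        rw [hf]
        simp only [dif_pos h]
        rw [hinj h.choose_spec]
      have hfsupp : ∀ v, v ∉ Set.range s → f v = 0 := by
        intro v hv
        rw [hf]
        simp only []
        rw [dif_neg]
        simpa [Set.mem_range] using hv
      have hval : ∀ n : ℕ, ((‖f (s n)‖₊ : ℝ≥0∞)) ^ 2 = ((4:ℝ≥0∞)⁻¹) ^ n := by
        intro n
        rw [hfs n]
        have h2 : (‖((2:ℂ)⁻¹ ^ n)‖₊ ^ 2 : ℝ≥0) = 4⁻¹ ^ n := by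
          apply NNReal.coe_injective
          push_cast
          rw [norm_pow, norm_inv, show ‖(2:ℂ)‖ = 2 from by norm_num,
            ← pow_mul, mul_comm, pow_mul]
          norm_num
        calc ((‖((2:ℂ)⁻¹ ^ n)‖₊ : ℝ≥0∞)) ^ 2 = ((‖((2:ℂ)⁻¹ ^ n)‖₊ ^ 2 : ℝ≥0) : ℝ≥0∞) := by
              push_cast; ring
          _ = ((4⁻¹ ^ n : ℝ≥0) : ℝ≥0∞) := by rw [h2]
          _ = ((4:ℝ≥0∞)⁻¹) ^ n := by
              rw [ENNReal.coe_pow, ENNReal.coe_inv (by norm_num)]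
              norm_num
      have hsub : (Function.support fun v => ((‖f v‖₊ : ℝ≥0∞)) ^ 2) ⊆ Set.range s := by
        intro v hv
        by_contra hvr
        exact hv (by simp [hfsupp v hvr])
      have htsum : (∑' v, ((‖f v‖₊ : ℝ≥0∞)) ^ 2) = ∑' n : ℕ, ((‖f (s n)‖₊ : ℝ≥0∞)) ^ 2 :=
        (hinj.tsum_eq hsub).symm
      have hfmem : Memℓp f 2 := by
        rw [ws_bridge1, htsum]
        simp_rw [hval]
        rw [show ((4:ℝ≥0∞)⁻¹) = (((4:ℝ≥0)⁻¹ : ℝ≥0) : ℝ≥0∞) by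
          rw [ENNReal.coe_inv (by norm_num)]; norm_num]
        simp_rw [← ENNReal.coe_pow]
        exact ENNReal.tsum_coe_ne_top_iff_summable.2
          (NNReal.summable_geometric (by rw [← NNReal.coe_lt_coe]; norm_num))
      have hΛ := hall ⟨f, hfmem⟩
      rw [ws_bridge1] at hΛ
      have hcoe : (⇑(⟨f, hfmem⟩ : lp (fun _ : V => ℂ) 2)) = f := rfl
      rw [hcoe, ws_key] at hΛ
      apply hΛ
      rw [eq_top_iff]
      calc (⊤:ℝ≥0∞) = ∑' _ : ℕ, (1:ℝ≥0∞) :=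
            (ENNReal.tsum_const_eq_top_of_ne_zero one_ne_zero).symm
        _ ≤ ∑' n : ℕ, childSum T lam (s n) * ((‖f (s n)‖₊ : ℝ≥0∞)) ^ 2 := by
            refine ENNReal.tsum_le_tsum fun n => ?_
            rw [hval]
            calc (1:ℝ≥0∞) = (4:ℝ≥0∞) ^ n * ((4:ℝ≥0∞)⁻¹) ^ n := by
                  rw [← mul_pow, ENNReal.mul_inv_cancel (by norm_num) (by norm_num), one_pow]
              _ ≤ childSum T lam (s n) * ((4:ℝ≥0∞)⁻¹) ^ n :=
                  mul_le_mul_left (hgt4 n).le _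
        _ ≤ ∑' u, childSum T lam u * ((‖f u‖₊ : ℝ≥0∞)) ^ 2 :=
            ENNReal.tsum_comp_le_tsum_of_injective hinj _
    · push_neg at hfin
      obtain ⟨u, hu⟩ := hfin
      have hδ := hall (lp.single 2 u (1:ℂ))
      rw [ws_bridge1, ws_key] at hδ
      apply hδ
      rw [eq_top_iff]
      calc (⊤:ℝ≥0∞) = childSum T lam u
            * ((‖(lp.single 2 u (1:ℂ) : lp (fun _ : V => ℂ) 2) u‖₊ : ℝ≥0∞)) ^ 2 := by
            rw [lp.single_apply_self]
            simp [hu]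
        _ ≤ _ := ENNReal.le_tsum u
  -- the continuous operator bound, shared by parts 2 and 3
  have hopbound : ∀ (g : lp (fun _ : V => ℂ) 2) (x : lp (fun _ : V => ℂ) 2),
      (∀ v, g v = lambdaT T lam ⇑x v) → (‖g‖₊ : ℝ≥0∞) ≤ C ^ (1/2:ℝ) * (‖x‖₊ : ℝ≥0∞) := by
    intro g x hg
    have h1 : ((‖g‖₊ : ℝ≥0∞)) ^ 2 ≤ C * ((‖x‖₊ : ℝ≥0∞)) ^ 2 := by
      rw [ws_bridge2]
      simp_rw [hg]
      exact hbound x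
    have := ws_sq_le h1
    rwa [ENNReal.mul_rpow_of_nonneg _ _ (by norm_num), ws_sqrt_sq] at this
  refine ⟨⟨hDE, hED⟩, ?_, ?_⟩
  · constructor
    · rintro ⟨S, hS⟩
      apply hDE
      intro f
      have : lambdaT T lam ⇑f = ⇑(S f) := funext fun v => (hS f v).symm
      rw [this]
      exact lp.memℓp (S f)
    · intro hC
      have hmem := hED hC
      let L : lp (fun _ : V => ℂ) 2 →ₗ[ℂ] lp (fun _ : V => ℂ) 2 :=
        { toFun := fun f => ⟨lambdaT T lam ⇑f, hmem f⟩
          map_add' := by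
            intro f g
            apply lp.ext
            have h1 : ⇑(f + g) = ⇑f + ⇑g := lp.coeFn_add f g
            show lambdaT T lam ⇑(f + g) = _
            rw [h1, ws_add]
            rfl
          map_smul' := by
            intro c f
            apply lp.ext
            have h1 : ⇑(c • f) = c • ⇑f := lp.coeFn_smul c f
            show lambdaT T lam ⇑(c • f) = _
            rw [h1, ws_smul]
            rfl }
      have hCr : C ^ (1/2:ℝ) ≠ ⊤ := ENNReal.rpow_ne_top_of_nonneg (by norm_num) hC
      refine ⟨LinearMap.mkContinuous L ((C ^ (1/2:ℝ)).toNNReal : ℝ) ?_, fun f v => rfl⟩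
      intro f
      have h2 : (‖L f‖₊ : ℝ≥0∞) ≤ C ^ (1/2:ℝ) * (‖f‖₊ : ℝ≥0∞) :=
        hopbound (L f) f (fun v => rfl)
      rw [← ENNReal.coe_toNNReal hCr, ← ENNReal.coe_mul, ENNReal.coe_le_coe] at h2
      calc ‖L f‖ = ((‖L f‖₊ : ℝ≥0) : ℝ) := rfl
        _ ≤ (((C ^ (1/2:ℝ)).toNNReal * ‖f‖₊ : ℝ≥0) : ℝ) := by exact_mod_cast h2
        _ = ((C ^ (1/2:ℝ)).toNNReal : ℝ) * ‖f‖ := by push_cast; rfl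
  · intro S hS
    have hC : C ≠ ⊤ := by
      apply hDE
      intro f
      have : lambdaT T lam ⇑f = ⇑(S f) := funext fun v => (hS f v).symm
      rw [this]
      exact lp.memℓp (S f)
    have hCr : C ^ (1/2:ℝ) ≠ ⊤ := ENNReal.rpow_ne_top_of_nonneg (by norm_num) hC
    refine le_antisymm ?_ ?_
    · -- ‖S‖ ≤ C^(1/2)
      rw [← ENNReal.coe_toNNReal hCr, ENNReal.coe_le_coe]
      refine ContinuousLinearMap.opNNNorm_le_bound S _ fun x => ?_
      have h2 : (‖S x‖₊ : ℝ≥0∞) ≤ C ^ (1/2:ℝ) * (‖x‖₊ : ℝ≥0∞) :=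
        hopbound (S x) x (hS x)
      rwa [← ENNReal.coe_toNNReal hCr, ← ENNReal.coe_mul, ENNReal.coe_le_coe] at h2
    · -- C^(1/2) ≤ ‖S‖
      have hge : ∀ u : V, childSum T lam u ≤ ((‖S‖₊ : ℝ≥0∞)) ^ 2 := by
        intro u
        set δ : lp (fun _ : V => ℂ) 2 := lp.single 2 u (1:ℂ) with hδdef
        have hδnorm : ‖δ‖ = 1 := by
          have := lp.norm_single (E := fun _ : V => ℂ) (p := 2) (by norm_num) u (1:ℂ)
          exact this.trans (by simp)
        have h1 : childSum T lam u ≤ ((‖S δ‖₊ : ℝ≥0∞)) ^ 2 := by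
          rw [ws_bridge2]
          simp_rw [hS δ]
          rw [ws_key]
          calc childSum T lam u
              = childSum T lam u * ((‖(δ : ∀ _ : V, ℂ) u‖₊ : ℝ≥0∞)) ^ 2 := by
                rw [hδdef, lp.single_apply_self]
                simp
            _ ≤ _ := ENNReal.le_tsum u
        refine h1.trans ?_
        have h2 : ‖S δ‖₊ ≤ ‖S‖₊ := by
          have := S.le_opNNNorm δ
          have hδn : ‖δ‖₊ = 1 := by
            ext
            simpa using hδnorm
          rwa [hδn, mul_one] at this
        exact pow_le_pow_left' (by exact_mod_cast h2) 2
      have h3 : C ≤ ((‖S‖₊ : ℝ≥0∞)) ^ 2 := iSup_le hge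
      calc C ^ (1/2:ℝ) ≤ (((‖S‖₊ : ℝ≥0∞)) ^ 2) ^ (1/2:ℝ) :=
            ENNReal.rpow_le_rpow h3 (by norm_num)
        _ = (‖S‖₊ : ℝ≥0∞) := ws_sqrt_sq _
end

section
/- A weighted shift S_λ on a directed tree T is injective if and only if T is leafless and Σ_{v∈Chi(u)} |λ_v|² > 0 for every vertex u. -/
open scoped ENNReal NNReal

/-- A weighted shift `S_λ` on a directed tree `T` is injective if and only if `T` is leafless
and `Σ_{v ∈ Chi(u)} |λ_v|² > 0` for every vertex `u`. -/
theorem stmt_10 {V : Type} (T : DirectedTree V) (lam : V → ℂ) :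
    (∀ f : V → ℂ, Memℓp f 2 → Memℓp (lambdaT T lam f) 2 →
        (∀ v : V, lambdaT T lam f v = 0) → ∀ v : V, f v = 0) ↔
      ((∀ u : V, ∃ v : V, T.E u v) ∧ ∀ u : V, 0 < childSum T lam u) := by
  classical
  have key : ∀ u : V, 0 < childSum T lam u ↔ ∃ v, T.E u v ∧ lam v ≠ 0 := by
    intro u
    rw [pos_iff_ne_zero, Ne, childSum, ENNReal.tsum_eq_zero]
    push_neg
    constructor
    · rintro ⟨⟨v, hv⟩, h⟩
      refine ⟨v, hv, fun h0 => h ?_⟩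
      simp [h0]
    · rintro ⟨v, hv, h0⟩
      refine ⟨⟨v, hv⟩, ?_⟩
      simpa using h0
  constructor
  · intro H
    have hc : ∀ u : V, 0 < childSum T lam u := by
      intro u
      rw [key]
      by_contra hcon
      push_neg at hcon
      set f : V → ℂ := fun w => if w = u then 1 else 0 with hf
      have hfl : Memℓp f 2 := by
        refine (memℓp_zero ?_).of_exponent_ge zero_le
        apply Set.Finite.subset (Set.finite_singleton u)
        intro w hw
        rw [Set.mem_setOf_eq] at hw
        by_contra hne
        rw [Set.mem_singleton_iff] at hne
        exact hw (by simp [hf, hne])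
      have hΛ : ∀ v : V, lambdaT T lam f v = 0 := by
        intro v
        unfold lambdaT
        split
        · next h =>
          by_cases hp : h.choose = u
          · have : lam v = 0 := hcon v (hp ▸ h.choose_spec)
            simp [this]
          · simp [hf, hp]
        · rfl
      have := H f hfl (by rw [funext hΛ]; exact zero_memℓp) hΛ u
      simp [hf] at this
    exact ⟨fun u => (Exists.imp (fun v h => h.1)) ((key u).mp (hc u)), hc⟩
  · rintro ⟨-, hc⟩ f _ _ hz v
    obtain ⟨w, hw, hlam⟩ := (key v).mp (hc v)
    have hex : ∃ u, T.E u w := ⟨v, hw⟩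
    have hch : hex.choose = v := by
      obtain ⟨p, -, hpu⟩ := T.parentUnique w hex
      rw [hpu _ hex.choose_spec, hpu _ hw]
    have h0 := hz w
    rw [lambdaT, dif_pos hex, hch] at h0
    exact (mul_eq_zero.mp h0).resolve_left hlam
end

section
/- For every directed tree T, there exists a family {β_v}_{v∈V} of unimodular complex numbers such that λ_v β_v β̄_{par(v)} = |λ_v| for all non-root vertices v. (This is the key combinatorial step establishing unitary equivalence of S_λ with S_{|λ|}; for rootless trees it requires a compactness argument over the product of circles.) -/
/-- `Chain E c a b x` : there is a directed path from `a` to `b` and `x` is the product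
of the weights `c` along it (weights attached to targets of edges). -/
inductive Chain {V : Type} (E : V → V → Prop) (c : V → ℂ) (a : V) : V → ℂ → Prop
  | refl : Chain E c a a 1
  | tail {b d : V} {x : ℂ} : Chain E c a b x → E b d → Chain E c a d (x * c d)

namespace Chain

variable {V : Type} {E : V → V → Prop} {c : V → ℂ} {a : V}

lemma to_rtg {b : V} {x : ℂ} (h : Chain E c a b x) : Relation.ReflTransGen E a b := by
  induction h with
  | refl => exact Relation.ReflTransGen.refl
  | tail _ hbd ih => exact ih.tail hbd

lemma of_rtg {b : V} (h : Relation.ReflTransGen E a b) : ∃ x, Chain E c a b x := by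
  induction h with
  | refl => exact ⟨1, Chain.refl⟩
  | tail _ hbd ih => obtain ⟨x, hx⟩ := ih; exact ⟨_, hx.tail hbd⟩

lemma norm_one (hc : ∀ v, ‖c v‖ = 1) {b : V} {x : ℂ} (h : Chain E c a b x) : ‖x‖ = 1 := by
  induction h with
  | refl => simp
  | tail _ _ ih => rw [norm_mul, ih, hc, one_mul]

lemma trans {b d : V} {x y : ℂ} (h1 : Chain E c a b x) (h2 : Chain E c b d y) :
    Chain E c a d (x * y) := by
  induction h2 with
  | refl => simpa using h1
  | tail _ hbd ih => rw [← mul_assoc]; exact ih.tail hbd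

end Chain

lemma chain_unique {V : Type} (T : DirectedTree V) (c : V → ℂ) (a : V) :
    ∀ {b : V} {x : ℂ}, Chain T.E c a b x → ∀ {y : ℂ}, Chain T.E c a b y → x = y := by
  intro b x h
  induction h with
  | refl =>
    intro y hy
    cases hy with
    | refl => rfl
    | tail h' hba =>
      exact absurd (Relation.TransGen.tail' h'.to_rtg hba) (T.noCircuit a)
  | tail h1 hbd ih =>
    intro y hy
    cases hy with
    | refl => exact absurd (Relation.TransGen.tail' h1.to_rtg hbd) (T.noCircuit a)
    | tail h1' hbd' =>
      obtain ⟨p, _, hp⟩ := T.parentUnique _ ⟨_, hbd⟩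
      have hb : _ = _ := (hp _ hbd').trans (hp _ hbd).symm
      subst hb
      rw [ih h1']

/-- ancestors of a common vertex are comparable -/
lemma anc_comparable {V : Type} (T : DirectedTree V) {a b : V} :
    ∀ {d : V}, Relation.ReflTransGen T.E a d → Relation.ReflTransGen T.E b d →
      Relation.ReflTransGen T.E a b ∨ Relation.ReflTransGen T.E b a := by
  intro d h
  induction h with
  | refl => intro hb; exact Or.inr hb
  | tail h1 h2 ih =>
    intro hb
    rcases hb.cases_tail with rfl | ⟨m', hbm', hm'⟩
    · exact Or.inl (h1.tail h2)
    · obtain ⟨p, _, hp⟩ := T.parentUnique _ ⟨_, h2⟩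
      have : m' = _ := (hp _ hm').trans (hp _ h2).symm
      subst this
      exact ih hbm'

/-- any two connected vertices have a common ancestor -/
lemma common_anc {V : Type} (T : DirectedTree V) {u v : V}
    (h : Relation.ReflTransGen (fun a b => T.E a b ∨ T.E b a) u v) :
    ∃ w, Relation.ReflTransGen T.E w u ∧ Relation.ReflTransGen T.E w v := by
  induction h with
  | refl => exact ⟨u, Relation.ReflTransGen.refl, Relation.ReflTransGen.refl⟩
  | tail h1 h2 ih =>
    obtain ⟨w, hwu, hwx⟩ := ih
    rcases h2 with hxy | hyx
    · exact ⟨w, hwu, hwx.tail hxy⟩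
    · rcases hwx.cases_tail with rfl | ⟨z, hwz, hz⟩
      · exact ⟨_, Relation.ReflTransGen.single hyx |>.trans hwu,
          Relation.ReflTransGen.refl⟩
      · obtain ⟨p, _, hp⟩ := T.parentUnique _ ⟨_, hz⟩
        have : z = _ := (hp _ hz).trans (hp _ hyx).symm
        subst this
        exact ⟨w, hwu, hwz⟩

/-- independence of the base point for the quotient of chain weights -/
lemma indep {V : Type} (T : DirectedTree V) {c : V → ℂ} (hc : ∀ v, ‖c v‖ = 1)
    {w1 w2 r v : V} {A1 B1 A2 B2 : ℂ}
    (hA1 : Chain T.E c w1 r A1) (hB1 : Chain T.E c w1 v B1)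
    (hA2 : Chain T.E c w2 r A2) (hB2 : Chain T.E c w2 v B2) :
    A1⁻¹ * B1 = A2⁻¹ * B2 := by
  have key : ∀ {a b : V} {A B A' B' : ℂ}, Relation.ReflTransGen T.E a b →
      Chain T.E c a r A → Chain T.E c a v B → Chain T.E c b r A' → Chain T.E c b v B' →
      A⁻¹ * B = A'⁻¹ * B' := by
    intro a b A B A' B' hab hA hB hA' hB'
    obtain ⟨d, hd⟩ := Chain.of_rtg (c := c) hab
    have hdne : d ≠ 0 := by
      intro h0
      have := hd.norm_one hc
      rw [h0] at this; simp at this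
    have e1 : A = d * A' := chain_unique T c a hA (hd.trans hA')
    have e2 : B = d * B' := chain_unique T c a hB (hd.trans hB')
    rw [e1, e2, mul_inv]
    have : d⁻¹ * A'⁻¹ * (d * B') = (d⁻¹ * d) * (A'⁻¹ * B') := by ring
    rw [this, inv_mul_cancel₀ hdne, one_mul]
  rcases anc_comparable T hA1.to_rtg hA2.to_rtg with h | h
  · exact key h hA1 hB1 hA2 hB2
  · exact (key h hA2 hB2 hA1 hB1).symm

/-- For every directed tree `T` and any family of weights `{λ_v}` there is a family
`{β_v}_{v ∈ V}` of unimodular complex numbers with `λ_v β_v conj(β_{par v}) = |λ_v|` for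
every non-root vertex `v` (with parent `u`). -/
theorem stmt_12 {V : Type} (T : DirectedTree V) (lam : V → ℂ) :
    ∃ β : V → ℂ, (∀ v : V, ‖β v‖ = 1) ∧
      ∀ u v : V, T.E u v → lam v * β v * (starRingEnd ℂ) (β u) = (‖lam v‖ : ℂ) := by
  classical
  set c : V → ℂ := fun v => if lam v = 0 then 1 else (‖lam v‖ : ℂ) / lam v with hcdef
  have hc : ∀ v, ‖c v‖ = 1 := by
    intro v
    simp only [hcdef]
    split_ifs with h
    · simp
    · rw [norm_div, Complex.norm_real, norm_norm, div_self (by simpa using h)]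
  have hlamc : ∀ v, lam v * c v = (‖lam v‖ : ℂ) := by
    intro v
    simp only [hcdef]
    split_ifs with h
    · simp [h]
    · field_simp
  obtain ⟨r⟩ := T.nonempty
  have hanc : ∀ v, ∃ w, Relation.ReflTransGen T.E w r ∧ Relation.ReflTransGen T.E w v :=
    fun v => common_anc T (T.connected r v)
  choose w hwr hwv using hanc
  choose A hA using fun v => Chain.of_rtg (c := c) (hwr v)
  choose B hB using fun v => Chain.of_rtg (c := c) (hwv v)
  refine ⟨fun v => (A v)⁻¹ * B v, ?_, ?_⟩
  · intro v
    rw [norm_mul, norm_inv, (hA v).norm_one hc, (hB v).norm_one hc]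
    norm_num
  · intro u v huv
    have hstep : (A v)⁻¹ * B v = (A u)⁻¹ * (B u * c v) :=
      indep T hc (hA v) (hB v) (hA u) ((hB u).tail huv)
    have hnormu : ‖(A u)⁻¹ * B u‖ = 1 := by
      rw [norm_mul, norm_inv, (hA u).norm_one hc, (hB u).norm_one hc]; norm_num
    have hconj : ((A u)⁻¹ * B u) * (starRingEnd ℂ) ((A u)⁻¹ * B u) = 1 := by
      rw [Complex.mul_conj]
      norm_cast
      rw [← Complex.sq_norm]
      rw [hnormu]; norm_num
    calc lam v * ((A v)⁻¹ * B v) * (starRingEnd ℂ) ((A u)⁻¹ * B u)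
        = (lam v * c v) * (((A u)⁻¹ * B u) * (starRingEnd ℂ) ((A u)⁻¹ * B u)) := by
          rw [hstep]; ring
      _ = (‖lam v‖ : ℂ) := by rw [hlamc, hconj, mul_one]
end

section
/- Let S_λ be a densely defined weighted shift on a directed tree. Then the span of the standard basis vectors {e_u : u∈V} lies in the domain of the adjoint S_λ*, and S_λ* e_u = conj(λ_u) e_{par(u)} for non-root u, while S_λ* e_root = 0. Moreover, for every f in the domain of S_λ*, (S_λ* f)(u) = Σ_{v∈Chi(u)} conj(λ_v) f(v). -/
open scoped ENNReal NNReal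

/-- `AdjPair T lam f g` says that the pair `(f, g)` belongs to the graph of the adjoint of the
weighted shift `S_λ`: `⟪S_λ h, f⟫ = ⟪h, g⟫` for every `h` in the domain of `S_λ`
(`S_λ h` being encoded by an `ℓ²` element `Sh` agreeing pointwise with `Λ_T h`). -/
def AdjPair {V : Type} (T : DirectedTree V) (lam : V → ℂ)
    (f g : lp (fun _ : V => ℂ) 2) : Prop :=
  ∀ h Sh : lp (fun _ : V => ℂ) 2, (∀ v : V, Sh v = lambdaT T lam (⇑h) v) →
    (inner ℂ Sh f : ℂ) = (inner ℂ h g : ℂ)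

/-! ### Auxiliary lemmas -/

lemma lambdaT_eq_of_edge {V : Type} (T : DirectedTree V) (lam : V → ℂ) (f : V → ℂ)
    {p v : V} (hpv : T.E p v) : lambdaT T lam f v = lam v * f p := by
  have hex : ∃ u, T.E u v := ⟨p, hpv⟩
  obtain ⟨q, _, huniq⟩ := T.parentUnique v hex
  have hch : hex.choose = p := by
    rw [huniq _ hex.choose_spec, huniq _ hpv]
  rw [lambdaT, dif_pos hex, hch]

lemma lambdaT_eq_zero_of_root {V : Type} (T : DirectedTree V) (lam : V → ℂ) (f : V → ℂ)
    {v : V} (h : ¬ ∃ u, T.E u v) : lambdaT T lam f v = 0 := by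
  rw [lambdaT, dif_neg h]

open Classical in
lemma lambdaT_single {V : Type} [DecidableEq V] (T : DirectedTree V) (lam : V → ℂ)
    (u v : V) :
    lambdaT T lam (⇑(lp.single 2 u (1 : ℂ) : lp (fun _ : V => ℂ) 2)) v
      = if T.E u v then lam v else 0 := by
  by_cases hex : ∃ p, T.E p v
  · obtain ⟨p, hpv⟩ := hex
    rw [lambdaT_eq_of_edge T lam _ hpv]
    by_cases huv : T.E u v
    · obtain ⟨q, _, huniq⟩ := T.parentUnique v ⟨p, hpv⟩
      have : p = u := by rw [huniq _ hpv, huniq _ huv]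
      subst this
      rw [if_pos huv, lp.single_apply_self, mul_one]
    · have hpu : p ≠ u := fun h => huv (h ▸ hpv)
      rw [if_neg huv, lp.single_apply_ne (E := fun _ : V => ℂ) 2 u (1 : ℂ) hpu, mul_zero]
  · rw [lambdaT_eq_zero_of_root T lam _ hex, if_neg (fun h => hex ⟨u, h⟩)]

lemma childSum_ne_top {V : Type} [DecidableEq V] (T : DirectedTree V) (lam : V → ℂ)
    (hdense : Dense {f : lp (fun _ : V => ℂ) 2 | Memℓp (lambdaT T lam ⇑f) 2}) (u : V) :
    childSum T lam u ≠ ⊤ := by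
  by_contra htop
  have hvan : ∀ f : lp (fun _ : V => ℂ) 2, Memℓp (lambdaT T lam ⇑f) 2 → f u = 0 := by
    intro f hf
    by_contra hfu
    have hsum : Summable fun v : V => ‖lambdaT T lam (⇑f) v‖ ^ (2 : ℝ≥0∞).toReal :=
      (memℓp_gen_iff (by norm_num)).mp hf
    have hsub : Summable fun v : {v : V // T.E u v} =>
        ‖lambdaT T lam (⇑f) (v : V)‖ ^ (2 : ℝ≥0∞).toReal := hsum.subtype _
    have hval : ∀ v : {v : V // T.E u v},
        ‖lambdaT T lam (⇑f) (v : V)‖ ^ (2 : ℝ≥0∞).toReal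
          = (‖lam (v : V)‖ ^ 2) * (‖f u‖ ^ 2) := by
      intro v
      rw [lambdaT_eq_of_edge T lam _ v.2]
      have : (2 : ℝ≥0∞).toReal = ((2 : ℕ) : ℝ) := by norm_num
      rw [this, Real.rpow_natCast]
      rw [norm_mul]
      ring
    have hsub2 : Summable fun v : {v : V // T.E u v} => ‖lam (v : V)‖ ^ 2 := by
      have h1 : Summable fun v : {v : V // T.E u v} =>
          (‖lam (v : V)‖ ^ 2) * (‖f u‖ ^ 2) := hsub.congr hval
      have h2 := h1.mul_right ((‖f u‖ ^ 2)⁻¹)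
      refine h2.congr fun v => ?_
      field_simp [hfu]
    have hsub3 : Summable fun v : {v : V // T.E u v} => ‖lam (v : V)‖₊ ^ 2 := by
      rw [← NNReal.summable_coe]
      refine hsub2.congr fun v => ?_
      push_cast
      rfl
    have hne : (∑' v : {v : V // T.E u v}, ((‖lam (v : V)‖₊ ^ 2 : ℝ≥0) : ℝ≥0∞)) ≠ ⊤ :=
      ENNReal.tsum_coe_ne_top_iff_summable.mpr hsub3
    apply hne
    rw [← htop]
    exact tsum_congr fun v => ENNReal.coe_pow _ _
  have hlip : LipschitzWith 1 (fun f : lp (fun _ : V => ℂ) 2 => f u) :=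
    LipschitzWith.of_dist_le_mul fun f g => by
      rw [NNReal.coe_one, one_mul, dist_eq_norm, dist_eq_norm]
      simpa using lp.norm_apply_le_norm (by norm_num : (2 : ℝ≥0∞) ≠ 0) (f - g) u
  have hclosed : IsClosed {f : lp (fun _ : V => ℂ) 2 | f u = 0} :=
    isClosed_eq hlip.continuous continuous_const
  have hsubset : closure {f : lp (fun _ : V => ℂ) 2 | Memℓp (lambdaT T lam ⇑f) 2}
      ⊆ {f : lp (fun _ : V => ℂ) 2 | f u = 0} := hclosed.closure_subset_iff.mpr hvan
  have h1 : (lp.single 2 u (1 : ℂ) : lp (fun _ : V => ℂ) 2) u = 0 := hsubset (hdense _)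
  rw [lp.single_apply_self] at h1
  exact one_ne_zero h1

lemma single_mem_domain {V : Type} [DecidableEq V] (T : DirectedTree V) (lam : V → ℂ)
    (u : V) (hfin : childSum T lam u ≠ ⊤) :
    Memℓp (lambdaT T lam (⇑(lp.single 2 u (1 : ℂ) : lp (fun _ : V => ℂ) 2))) 2 := by
  rw [memℓp_gen_iff (by norm_num : (0:ℝ) < (2 : ℝ≥0∞).toReal)]
  have hsub3 : Summable fun v : {v : V // T.E u v} => ‖lam (v : V)‖₊ ^ 2 :=
    ENNReal.tsum_coe_ne_top_iff_summable.mp (by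
      rw [tsum_congr fun v : {v : V // T.E u v} =>
        (ENNReal.coe_pow (‖lam (v : V)‖₊) 2)]
      exact hfin)
  have hsub2 : Summable fun v : {v : V // T.E u v} => ‖lam (v : V)‖ ^ 2 := by
    have := NNReal.summable_coe.mpr hsub3
    refine this.congr fun v => ?_
    push_cast
    rfl
  have hind := (summable_subtype_iff_indicator
    (s := {v : V | T.E u v}) (f := fun v => ‖lam v‖ ^ 2)).mp hsub2
  refine hind.congr fun v => ?_
  classical
  rw [lambdaT_single T lam u v]
  have h2 : (2 : ℝ≥0∞).toReal = ((2 : ℕ) : ℝ) := by norm_num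
  rw [h2, Real.rpow_natCast]
  by_cases hv : T.E u v
  · rw [if_pos hv, Set.indicator_of_mem (show v ∈ {v : V | T.E u v} from hv)]
  · rw [if_neg hv, Set.indicator_of_notMem (show v ∉ {v : V | T.E u v} from hv)]
    simp

/-- For a densely defined weighted shift `S_λ` on a directed tree: every basis vector `e_u`
lies in the domain of `S_λ*`, with `S_λ* e_u = conj(λ_u) e_{par u}` for non-root `u` and
`S_λ* e_u = 0` for a root `u`; moreover `(S_λ* f)(u) = Σ_{v ∈ Chi(u)} conj(λ_v) f(v)` for
every `f` in the domain of `S_λ*`. -/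
theorem stmt_13 {V : Type} [DecidableEq V] (T : DirectedTree V) (lam : V → ℂ)
    (hdense : Dense {f : lp (fun _ : V => ℂ) 2 | Memℓp (lambdaT T lam ⇑f) 2}) :
    (∀ u : V, T.isRoot u → AdjPair T lam (lp.single 2 u (1 : ℂ)) 0) ∧
    (∀ u p : V, T.E p u →
      AdjPair T lam (lp.single 2 u (1 : ℂ))
        ((starRingEnd ℂ) (lam u) • lp.single 2 p (1 : ℂ))) ∧
    (∀ f g : lp (fun _ : V => ℂ) 2, AdjPair T lam f g →
      ∀ u : V, g u = ∑' v : {v : V // T.E u v},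
        (starRingEnd ℂ) (lam (v : V)) * f (v : V)) := by
  refine ⟨?_, ?_, ?_⟩
  · intro u hroot h Sh hSh
    have hShu : Sh u = 0 := by
      rw [hSh u, lambdaT_eq_zero_of_root T lam _ (fun ⟨p, hp⟩ => hroot p hp)]
    rw [lp.inner_single_right, inner_zero_right]
    simp [RCLike.inner_apply, hShu]
  · intro u p hpu h Sh hSh
    have hShu : Sh u = lam u * h p := by
      rw [hSh u, lambdaT_eq_of_edge T lam _ hpu]
    rw [lp.inner_single_right, inner_smul_right, lp.inner_single_right]
    simp only [RCLike.inner_apply, hShu]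
    rw [map_mul]
    ring
  · intro f g hadj u
    classical
    have hfin := childSum_ne_top T lam hdense u
    have hmem := single_mem_domain T lam u hfin
    set Sh : lp (fun _ : V => ℂ) 2 := ⟨_, hmem⟩ with hShdef
    have hShv : ∀ v : V, Sh v = if T.E u v then lam v else 0 := by
      intro v
      classical
      exact lambdaT_single T lam u v
    have key := hadj (lp.single 2 u (1 : ℂ)) Sh (fun v => rfl)
    have hrhs : (inner ℂ (lp.single 2 u (1 : ℂ)) g : ℂ) = g u := by
      rw [lp.inner_single_left]
      simp [RCLike.inner_apply]
    rw [hrhs] at key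
    rw [← key, lp.inner_eq_tsum]
    rw [← tsum_subtype_eq_of_support_subset
      (s := {v : V | T.E u v}) (f := fun v : V => (inner ℂ (Sh v) (f v) : ℂ)) ?_]
    · refine tsum_congr fun v => ?_
      simp only [RCLike.inner_apply']
      have h1 : lambdaT T lam (⇑(lp.single 2 u (1 : ℂ) : lp (fun _ : V => ℂ) 2)) (v : V)
          = lam (v : V) := by
        rw [lambdaT_single T lam u (v : V), if_pos (show T.E u (v : V) from v.2)]
      exact congrArg (· * f (v : V)) (congrArg _ h1)
    · intro v hv
      rw [Function.mem_support] at hv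
      by_contra hcv
      apply hv
      have h0 : lambdaT T lam (⇑(lp.single 2 u (1 : ℂ) : lp (fun _ : V => ℂ) 2)) v = 0 := by
        rw [lambdaT_single T lam u v, if_neg (show ¬ T.E u v from hcv)]
      simp only [RCLike.inner_apply']
      show (starRingEnd ℂ) (lambdaT T lam (⇑(lp.single 2 u (1 : ℂ) : lp (fun _ : V => ℂ) 2)) v) * f v = 0
      rw [h0, map_zero, zero_mul]
end

section
/- If S_λ is a densely defined weighted shift on a directed tree, then for every u ∈ V, the basis vector e_u lies in the domain of S_λ* S_λ and S_λ* S_λ e_u = ‖S_λ e_u‖² e_u; consequently |S_λ| e_u = ‖S_λ e_u‖ e_u, i.e., the modulus of S_λ is the diagonal operator with diagonal {‖S_λ e_u‖}_{u∈V}. -/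
open scoped ENNReal NNReal

/-- For a densely defined weighted shift `S_λ` on a directed tree, if `e_u` belongs to the
domain of `S_λ` (witnessed by `Su ∈ ℓ²(V)` with `Su = Λ_T e_u`), then `S_λ e_u` belongs to
the domain of `S_λ*` and `S_λ* S_λ e_u = ‖S_λ e_u‖² e_u`; i.e. `e_u` is an eigenvector of
`S_λ* S_λ` (hence of the modulus `|S_λ|`) with eigenvalue `‖S_λ e_u‖²`. -/
theorem stmt_14 {V : Type} [DecidableEq V] (T : DirectedTree V) (lam : V → ℂ)
    (hdense : Dense {f : lp (fun _ : V => ℂ) 2 | Memℓp (lambdaT T lam ⇑f) 2})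
    (u : V) (Su : lp (fun _ : V => ℂ) 2)
    (hSu : ∀ v : V, Su v = lambdaT T lam (⇑(lp.single 2 u (1 : ℂ))) v) :
    AdjPair T lam Su (((‖Su‖ ^ 2 : ℝ) : ℂ) • lp.single 2 u (1 : ℂ)) := by
  intro h Sh hSh
  have key : ∀ v : V, (inner ℂ (Sh v) (Su v) : ℂ)
      = starRingEnd ℂ (h u) * inner ℂ (Su v) (Su v) := by
    intro v
    rw [hSh v, hSu v]
    unfold lambdaT
    by_cases hv : ∃ p, T.E p v
    · simp only [dif_pos hv]
      by_cases hpu : hv.choose = u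
      · rw [hpu, lp.single_apply_self]
        simp only [RCLike.inner_apply, map_mul, mul_one]
        ring
      · rw [lp.single_apply_ne 2 u 1 hpu]
        simp
    · simp [dif_neg hv]
  have hinner : (inner ℂ Sh Su : ℂ) = starRingEnd ℂ (h u) * inner ℂ Su Su := by
    rw [lp.inner_eq_tsum, lp.inner_eq_tsum]
    rw [tsum_congr key, tsum_mul_left]
  rw [hinner, inner_smul_right, lp.inner_single_right]
  have : (inner ℂ (Su : lp (fun _ : V => ℂ) 2) Su : ℂ) = ((‖Su‖ ^ 2 : ℝ) : ℂ) := by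
    rw [inner_self_eq_norm_sq_to_K]; norm_cast
  rw [this]
  simp only [RCLike.inner_apply, map_one, mul_one]
  ring
end

section
/- Let {t_n}_{n≥0} be a Stieltjes moment sequence and set t_{-1}=1. Then the shifted sequence {t_{n-1}}_{n≥0} is a Stieltjes moment sequence if and only if there exists a representing measure μ of {t_n} concentrated on [0,∞) with ∫_0^∞ (1/s) dμ(s) ≤ 1. In that case, the measure ν(σ) = ∫_σ (1/s) dμ(s) + (1 - ∫_0^∞ (1/s) dμ(s)) δ_0(σ) represents {t_{n-1}}. -/
open MeasureTheory
open scoped NNReal ENNReal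

/-- `μ` is a representing measure (concentrated on `[0, ∞)`) of the Stieltjes moment
sequence `t`. -/
def StieltjesRep (μ : Measure ℝ) (t : ℕ → ℝ) : Prop :=
  μ {x : ℝ | x < 0} = 0 ∧
    ∀ n : ℕ, Integrable (fun s : ℝ => s ^ n) μ ∧ t n = ∫ s : ℝ, s ^ n ∂μ

private lemma rep_ae_nonneg {μ : Measure ℝ} {t : ℕ → ℝ} (h : StieltjesRep μ t) :
    ∀ᵐ s ∂μ, 0 ≤ s := by
  rw [ae_iff]
  simpa [not_le] using h.1

private lemma part2 (t : ℕ → ℝ) (μ : Measure ℝ) (hμ : StieltjesRep μ t)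
    (hL : ∫⁻ s : ℝ, (ENNReal.ofReal s)⁻¹ ∂μ ≤ 1) :
    StieltjesRep
      (μ.withDensity (fun s => (ENNReal.ofReal s)⁻¹) +
        (1 - ∫⁻ s : ℝ, (ENNReal.ofReal s)⁻¹ ∂μ) • Measure.dirac (0 : ℝ))
      (fun n => if n = 0 then 1 else t (n - 1)) := by
  set L := ∫⁻ s : ℝ, (ENNReal.ofReal s)⁻¹ ∂μ with hLdef
  have hzero : μ {(0 : ℝ)} = 0 := by
    by_contra h
    have h1 : (⊤ : ℝ≥0∞) * μ {(0 : ℝ)} ≤ L := by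
      calc (⊤ : ℝ≥0∞) * μ {(0 : ℝ)}
          = ∫⁻ s in {(0 : ℝ)}, (ENNReal.ofReal s)⁻¹ ∂μ := by
            rw [lintegral_singleton]; simp
        _ ≤ L := setLIntegral_le_lintegral _ _
    rw [ENNReal.top_mul h] at h1
    exact absurd (h1.trans hL) (by simp)
  have haepos : ∀ᵐ s ∂μ, 0 < s := by
    rw [ae_iff]
    have hset : {a : ℝ | ¬ 0 < a} = {x : ℝ | x < 0} ∪ {(0 : ℝ)} := by
      ext x
      simp only [Set.mem_setOf_eq, not_lt, Set.mem_union, Set.mem_singleton_iff]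
      constructor
      · intro hx
        rcases lt_or_eq_of_le hx with h | h
        · exact Or.inl h
        · exact Or.inr h
      · rintro (h | h)
        · exact h.le
        · exact h.le
    rw [hset]
    exact measure_union_null hμ.1 hzero
  have hdens : (fun s : ℝ => (ENNReal.ofReal s)⁻¹) =ᵐ[μ]
      (fun s : ℝ => ((Real.toNNReal s⁻¹ : ℝ≥0) : ℝ≥0∞)) := by
    filter_upwards [haepos] with s hs
    rw [← ENNReal.ofReal_inv_of_pos hs]
    rfl
  have hwd : μ.withDensity (fun s : ℝ => (ENNReal.ofReal s)⁻¹)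
      = μ.withDensity (fun s : ℝ => ((Real.toNNReal s⁻¹ : ℝ≥0) : ℝ≥0∞)) :=
    withDensity_congr_ae hdens
  have hm : Measurable fun s : ℝ => Real.toNNReal s⁻¹ :=
    measurable_real_toNNReal.comp measurable_inv
  have hLtop : (1 : ℝ≥0∞) - L ≠ ⊤ :=
    (tsub_le_self.trans_lt ENNReal.one_lt_top).ne
  have hνuniv : (μ.withDensity (fun s => (ENNReal.ofReal s)⁻¹) +
      (1 - L) • Measure.dirac (0 : ℝ)) Set.univ = 1 := by
    rw [Measure.add_apply, withDensity_apply _ MeasurableSet.univ, Measure.smul_apply,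
      setLIntegral_univ]
    simp only [measure_univ, smul_eq_mul, mul_one]
    rw [add_comm]
    exact tsub_add_cancel_of_le hL
  constructor
  · have hIio : {x : ℝ | x < 0} = Set.Iio (0 : ℝ) := rfl
    rw [Measure.add_apply, hIio]
    have h1 : μ.withDensity (fun s => (ENNReal.ofReal s)⁻¹) (Set.Iio (0 : ℝ)) = 0 := by
      rw [withDensity_apply _ measurableSet_Iio]
      exact setLIntegral_measure_zero _ _ (hIio ▸ hμ.1)
    have h2 : ((1 - L) • Measure.dirac (0 : ℝ)) (Set.Iio (0 : ℝ)) = 0 := by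
      rw [Measure.smul_apply, Measure.dirac_apply' _ measurableSet_Iio]
      simp
    rw [h1, h2, add_zero]
  · intro n
    match n with
    | 0 =>
      haveI hfin : IsFiniteMeasure (μ.withDensity (fun s => (ENNReal.ofReal s)⁻¹) +
          (1 - L) • Measure.dirac (0 : ℝ)) :=
        ⟨by rw [hνuniv]; exact ENNReal.one_lt_top⟩
      have hic : Integrable (fun s : ℝ => s ^ 0)
          (μ.withDensity (fun s => (ENNReal.ofReal s)⁻¹) + (1 - L) • Measure.dirac (0 : ℝ)) := by
        simp only [pow_zero]
        exact integrable_const 1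
      refine ⟨hic, ?_⟩
      simp [integral_const, hνuniv]
      rw [measureReal_def, hνuniv, ENNReal.toReal_one]
    | Nat.succ m =>
      have haeq : (fun s : ℝ => (Real.toNNReal s⁻¹) • s ^ (m + 1)) =ᵐ[μ]
          fun s => s ^ m := by
        filter_upwards [haepos] with s hs
        rw [NNReal.smul_def, Real.coe_toNNReal _ (inv_nonneg.2 hs.le), smul_eq_mul, pow_succ,
          ← mul_assoc, mul_comm s⁻¹ (s ^ m), mul_assoc, inv_mul_cancel₀ hs.ne', mul_one]
      have hint1 : Integrable (fun s : ℝ => s ^ (m + 1))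
          (μ.withDensity fun s => (ENNReal.ofReal s)⁻¹) := by
        rw [hwd, integrable_withDensity_iff_integrable_smul hm]
        exact ((hμ.2 m).1).congr haeq.symm
      have hd : Integrable (fun s : ℝ => s ^ (m + 1)) (Measure.dirac (0 : ℝ)) := by
        refine ⟨(measurable_id.pow_const _).aestronglyMeasurable, ?_⟩
        show (∫⁻ a : ℝ, ‖a ^ (m + 1)‖₊ ∂Measure.dirac 0) < ⊤
        rw [lintegral_dirac]
        exact ENNReal.coe_lt_top
      have hint2 : Integrable (fun s : ℝ => s ^ (m + 1))
          ((1 - L) • Measure.dirac (0 : ℝ)) := hd.smul_measure hLtop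
      refine ⟨hint1.add_measure hint2, ?_⟩
      rw [integral_add_measure hint1 hint2]
      have e1 : ∫ s, s ^ (m + 1) ∂(μ.withDensity fun s => (ENNReal.ofReal s)⁻¹) = t m := by
        rw [hwd, integral_withDensity_eq_integral_smul hm, integral_congr_ae haeq]
        exact ((hμ.2 m).2).symm
      have e2 : ∫ s, s ^ (m + 1) ∂((1 - L) • Measure.dirac (0 : ℝ)) = 0 := by
        rw [integral_smul_measure, integral_dirac]
        simp
      rw [e1, e2, add_zero]
      simp

private lemma forward (t : ℕ → ℝ) (ν : Measure ℝ)
    (hν : StieltjesRep ν fun n => if n = 0 then 1 else t (n - 1)) :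
    ∃ μ : Measure ℝ, StieltjesRep μ t ∧ ∫⁻ s : ℝ, (ENNReal.ofReal s)⁻¹ ∂μ ≤ 1 := by
  have hae : ∀ᵐ s ∂ν, 0 ≤ s := rep_ae_nonneg hν
  have hνuniv : ν Set.univ = 1 := by
    obtain ⟨hint, hval⟩ := hν.2 0
    simp only [pow_zero, if_pos rfl] at hint hval
    rw [integral_const, smul_eq_mul, mul_one] at hval
    exact (ENNReal.toReal_eq_one_iff _).mp hval.symm
  refine ⟨ν.withDensity (fun s => ((Real.toNNReal s : ℝ≥0) : ℝ≥0∞)), ⟨?_, ?_⟩, ?_⟩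
  · have hIio : {x : ℝ | x < 0} = Set.Iio (0 : ℝ) := rfl
    rw [hIio, withDensity_apply _ measurableSet_Iio]
    have hz : ∀ᵐ x ∂ν, x ∈ {x : ℝ | x < 0} →
        ((Real.toNNReal x : ℝ≥0) : ℝ≥0∞) = (0 : ℝ≥0∞) := by
      refine ae_of_all _ fun x hx => ?_
      simp [Real.toNNReal_of_nonpos (le_of_lt hx)]
    have hz' : Set.EqOn (fun x : ℝ => ((Real.toNNReal x : ℝ≥0) : ℝ≥0∞)) (fun _ => 0)
        (Set.Iio (0 : ℝ)) := fun x hx => by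
      simp [Real.toNNReal_of_nonpos (Set.mem_Iio.mp hx).le]
    rw [setLIntegral_congr_fun measurableSet_Iio hz']
    simp
  · intro n
    have haeq : (fun s : ℝ => (Real.toNNReal s) • s ^ n) =ᵐ[ν] fun s => s ^ (n + 1) := by
      filter_upwards [hae] with s hs
      rw [NNReal.smul_def, Real.coe_toNNReal _ hs, smul_eq_mul, pow_succ, mul_comm]
    obtain ⟨hint, hval⟩ := hν.2 (n + 1)
    simp only [Nat.succ_ne_zero, if_false, Nat.add_sub_cancel] at hval
    refine ⟨?_, ?_⟩
    · rw [integrable_withDensity_iff_integrable_smul measurable_real_toNNReal]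
      exact hint.congr haeq.symm
    · rw [integral_withDensity_eq_integral_smul measurable_real_toNNReal,
        integral_congr_ae haeq]
      exact hval
  · rw [lintegral_withDensity_eq_lintegral_mul _
      measurable_real_toNNReal.coe_nnreal_ennreal
      (g := fun s : ℝ => (ENNReal.ofReal s)⁻¹) ENNReal.measurable_ofReal.inv]
    calc ∫⁻ s, ((fun s : ℝ => ((Real.toNNReal s : ℝ≥0) : ℝ≥0∞)) *
          fun s => (ENNReal.ofReal s)⁻¹) s ∂ν
        ≤ ∫⁻ _, 1 ∂ν := by
          refine lintegral_mono fun s => ?_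
          simp only [Pi.mul_apply]
          by_cases h : ENNReal.ofReal s = 0
          · rw [show ((Real.toNNReal s : ℝ≥0) : ℝ≥0∞) = ENNReal.ofReal s from rfl, h]
            simp
          · rw [show ((Real.toNNReal s : ℝ≥0) : ℝ≥0∞) = ENNReal.ofReal s from rfl,
              ENNReal.mul_inv_cancel h ENNReal.ofReal_ne_top]
      _ = 1 := by rw [lintegral_one, hνuniv]

/-- Backward extendibility of Stieltjes moment sequences: with `t₋₁ = 1`, the shifted
sequence `{t_{n-1}}` is a Stieltjes moment sequence iff `t` has a representing measure `μ`
on `[0, ∞)` with `∫ (1/s) dμ(s) ≤ 1` (convention `1/0 = ∞`); in that case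
`ν = (1/s) dμ + (1 - ∫ (1/s) dμ) δ₀` represents `{t_{n-1}}`. -/
theorem stmt_16 (t : ℕ → ℝ) (ht : ∃ μ : Measure ℝ, StieltjesRep μ t) :
    ((∃ ν : Measure ℝ, StieltjesRep ν (fun n => if n = 0 then 1 else t (n - 1))) ↔
      ∃ μ : Measure ℝ, StieltjesRep μ t ∧ ∫⁻ s : ℝ, (ENNReal.ofReal s)⁻¹ ∂μ ≤ 1) ∧
    ∀ μ : Measure ℝ, StieltjesRep μ t → ∫⁻ s : ℝ, (ENNReal.ofReal s)⁻¹ ∂μ ≤ 1 →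
      StieltjesRep
        (μ.withDensity (fun s => (ENNReal.ofReal s)⁻¹) +
          (1 - ∫⁻ s : ℝ, (ENNReal.ofReal s)⁻¹ ∂μ) • Measure.dirac (0 : ℝ))
        (fun n => if n = 0 then 1 else t (n - 1)) := by
  constructor
  · constructor
    · rintro ⟨ν, hν⟩
      exact forward t ν hν
    · rintro ⟨μ, hμ, hL⟩
      exact ⟨_, part2 t μ hμ hL⟩
  · exact fun μ hμ hL => part2 t μ hμ hL
end

section
/- Let {a_n}_{n≥0} be a completely alternating sequence with representing measure τ on [0,1], and set a_{-1}=1. Then {a_{n-1}}_{n≥0} is completely alternating if and only if 1 + ∫_0^1 (1/s) dτ(s) ≤ a_0. In that case τ({0})=0 and the measure ρ(σ) = ∫_σ (1/s) dτ(s) + (a_0 - 1 - ∫_0^1 (1/s) dτ(s)) δ_0(σ) is the representing measure of {a_{n-1}}. -/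
open MeasureTheory

/-- A real sequence `a` is completely alternating if
`Σ_{j=0}^n (-1)^j C(n,j) a_{m+j} ≤ 0` for all `m ≥ 0`, `n ≥ 1`. -/
def CompletelyAlternating (a : ℕ → ℝ) : Prop :=
  ∀ m n : ℕ, 1 ≤ n →
    ∑ j ∈ Finset.range (n + 1), (-1 : ℝ) ^ j * (n.choose j : ℝ) * a (m + j) ≤ 0

/-- `τ` is the representing measure on `[0,1]` of the completely alternating sequence `a`:
`τ` is a finite measure concentrated on `[0,1]` with
`a_n = a_0 + ∫ (1 + s + ... + s^{n-1}) dτ(s)` for `n ≥ 1`. -/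
def RepresentsCA (τ : Measure ℝ) (a : ℕ → ℝ) : Prop :=
  τ (Set.Icc (0 : ℝ) 1)ᶜ = 0 ∧ IsFiniteMeasure τ ∧
    ∀ n : ℕ, 1 ≤ n → a n = a 0 + ∫ s : ℝ, (∑ k ∈ Finset.range n, s ^ k) ∂τ

open Finset

private def Ssum (c : ℕ → ℝ) (m n : ℕ) : ℝ :=
  ∑ j ∈ Finset.range (n + 1), (-1 : ℝ) ^ j * (n.choose j : ℝ) * c (m + j)

private lemma Ssum_rec (c : ℕ → ℝ) (m n : ℕ) :
    Ssum c m (n + 1) = Ssum c m n - Ssum c (m + 1) n := by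
  have h1 : Ssum c m n
      = ∑ j ∈ range n, (-1:ℝ)^(j+1) * (n.choose (j+1) : ℝ) * c (m+(j+1)) + c m := by
    unfold Ssum
    rw [Finset.sum_range_succ' (fun j => (-1:ℝ)^j * (n.choose j : ℝ) * c (m+j)) n]
    norm_num
  have hT : ∑ j ∈ range (n+1), (-1:ℝ)^(j+1) * (n.choose (j+1) : ℝ) * c (m+(j+1))
      = Ssum c m n - c m := by
    rw [Finset.sum_range_succ, h1]
    simp [Nat.choose_succ_self]
  have hU : ∑ j ∈ range (n+1), (-1:ℝ)^(j+1) * (n.choose j : ℝ) * c (m+(j+1))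
      = - Ssum c (m+1) n := by
    unfold Ssum
    rw [← Finset.sum_neg_distrib]
    refine Finset.sum_congr rfl fun j hj => ?_
    have : m + (j+1) = m + 1 + j := by omega
    rw [this]; ring
  have h2 : Ssum c m (n+1)
      = ∑ j ∈ range (n+1), (-1:ℝ)^(j+1) * (((n+1).choose (j+1)) : ℝ) * c (m+(j+1)) + c m := by
    unfold Ssum
    rw [Finset.sum_range_succ' (fun j => (-1:ℝ)^j * ((n+1).choose j : ℝ) * c (m+j)) (n+1)]
    norm_num
  rw [h2]
  have h3 : ∀ j, (((n+1).choose (j+1)) : ℝ) = (n.choose j : ℝ) + (n.choose (j+1) : ℝ) := by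
    intro j; rw [Nat.choose_succ_succ]; push_cast; ring
  calc ∑ j ∈ range (n+1), (-1:ℝ)^(j+1) * (((n+1).choose (j+1)) : ℝ) * c (m+(j+1)) + c m
      = (∑ j ∈ range (n+1), (-1:ℝ)^(j+1) * (n.choose j : ℝ) * c (m+(j+1))
        + ∑ j ∈ range (n+1), (-1:ℝ)^(j+1) * (n.choose (j+1) : ℝ) * c (m+(j+1))) + c m := by
        rw [← Finset.sum_add_distrib]
        congr 1
        exact Finset.sum_congr rfl fun j hj => by rw [h3]; ring
    _ = Ssum c m n - Ssum c (m+1) n := by rw [hU, hT]; ring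

private lemma alt_sum_choose (n : ℕ) :
    ∑ j ∈ range (n+1), (-1:ℝ)^j * (n.choose j : ℝ) = if n = 0 then 1 else 0 := by
  have := Int.alternating_sum_range_choose (n := n)
  have h2 : ((∑ m ∈ range (n + 1), (-1:ℤ) ^ m * ↑(n.choose m) : ℤ) : ℝ)
      = ∑ j ∈ range (n+1), (-1:ℝ)^j * (n.choose j : ℝ) := by push_cast; rfl
  rw [← h2, this]
  split <;> norm_num

private lemma Ssum_geom (n : ℕ) (s : ℝ) :
    Ssum (fun j => ∑ k ∈ range j, s^k) 0 (n+1) = -(1-s)^n := by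
  induction n with
  | zero =>
    unfold Ssum
    simp [Finset.sum_range_succ]
  | succ n ih =>
    rw [Ssum_rec, ih]
    have h1 : Ssum (fun j => ∑ k ∈ range j, s^k) 1 (n+1)
        = s * Ssum (fun j => ∑ k ∈ range j, s^k) 0 (n+1)
          + ∑ j ∈ range (n+2), (-1:ℝ)^j * ((n+1).choose j : ℝ) := by
      unfold Ssum
      rw [Finset.mul_sum, ← Finset.sum_add_distrib]
      refine Finset.sum_congr rfl fun j hj => ?_
      have : (1 + j) = j + 1 := by omega
      simp only [this, Nat.zero_add]
      rw [geom_sum_succ]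
      ring
    rw [h1, ih, alt_sum_choose]
    simp
    ring

private lemma ae_mem_Icc (μ : Measure ℝ) (hμc : μ (Set.Icc (0:ℝ) 1)ᶜ = 0) :
    ∀ᵐ s ∂μ, s ∈ Set.Icc (0:ℝ) 1 := by
  rw [ae_iff]
  convert hμc using 2
  rfl

private lemma integrable_of_cont (μ : Measure ℝ) (hμc : μ (Set.Icc (0:ℝ) 1)ᶜ = 0)
    [IsFiniteMeasure μ] (f : ℝ → ℝ) (hf : Continuous f) : Integrable f μ := by
  obtain ⟨C, hC⟩ := (isCompact_Icc (a := (0:ℝ)) (b := 1)).exists_bound_of_continuousOn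
    hf.continuousOn
  exact (integrable_const C).mono' hf.aestronglyMeasurable
    ((ae_mem_Icc μ hμc).mono fun s hs => hC s hs)

private lemma cont_geom (n : ℕ) : Continuous (fun s : ℝ => ∑ k ∈ range n, s^k) := by
  continuity

private lemma cont_g (n : ℕ) : Continuous (fun s : ℝ => ∑ i ∈ range n, (1-s)^i) := by
  continuity

private lemma Ssum_a (a : ℕ → ℝ) (τ : Measure ℝ) [IsFiniteMeasure τ]
    (hτc : τ (Set.Icc (0:ℝ) 1)ᶜ = 0)
    (hrep : ∀ n : ℕ, a n = a 0 + ∫ s : ℝ, (∑ k ∈ Finset.range n, s ^ k) ∂τ)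
    (n : ℕ) : Ssum a 0 (n+1) = -∫ s : ℝ, (1-s)^n ∂τ := by
  unfold Ssum
  have h1 : ∀ j, (-1:ℝ)^j * ((n+1).choose j : ℝ) * a (0 + j)
      = (-1:ℝ)^j * ((n+1).choose j : ℝ) * a 0
        + ∫ s : ℝ, (-1:ℝ)^j * ((n+1).choose j : ℝ) * (∑ k ∈ range j, s^k) ∂τ := by
    intro j
    rw [integral_const_mul, Nat.zero_add, hrep j]
    ring
  simp only [h1]
  rw [Finset.sum_add_distrib]
  have h2 : ∑ j ∈ range (n+1+1), (-1:ℝ)^j * ((n+1).choose j : ℝ) * a 0 = 0 := by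
    rw [← Finset.sum_mul, alt_sum_choose]
    simp
  rw [h2, zero_add,
    ← integral_finset_sum _ (f := fun j s => (-1:ℝ)^j * ((n+1).choose j : ℝ) * (∑ k ∈ range j, s^k)) (fun j hj => (integrable_of_cont τ hτc _ (continuous_const.mul (cont_geom j)))),
    ← integral_neg]
  refine integral_congr_ae (Filter.Eventually.of_forall fun s => ?_)
  have := Ssum_geom n s
  unfold Ssum at this
  simpa using this

private lemma Ssum_shift (a : ℕ → ℝ) (m n : ℕ) :
    Ssum (fun j => if j = 0 then 1 else a (j-1)) (m+1) n = Ssum a m n := by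
  unfold Ssum
  refine Finset.sum_congr rfl fun j hj => ?_
  have h1 : m + 1 + j ≠ 0 := by omega
  simp only [h1, if_false]
  congr 2
  omega

private lemma Ssum_b (a : ℕ → ℝ) (τ : Measure ℝ) [IsFiniteMeasure τ]
    (hτc : τ (Set.Icc (0:ℝ) 1)ᶜ = 0)
    (hrep : ∀ n : ℕ, a n = a 0 + ∫ s : ℝ, (∑ k ∈ Finset.range n, s ^ k) ∂τ)
    (n : ℕ) :
    Ssum (fun j => if j = 0 then 1 else a (j-1)) 0 (n+1)
      = (1 - a 0) + ∫ s : ℝ, (∑ i ∈ range n, (1-s)^i) ∂τ := by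
  induction n with
  | zero =>
    unfold Ssum
    simp [Finset.sum_range_succ]
    ring
  | succ n ih =>
    rw [Ssum_rec, ih, Ssum_shift, Ssum_a a τ hτc hrep n]
    have : ∀ s : ℝ, ∑ i ∈ range (n+1), (1-s)^i = (1-s)^n + ∑ i ∈ range n, (1-s)^i :=
      fun s => geom_sum_succ'
    simp only [this]
    rw [integral_add (integrable_of_cont τ hτc _ (by fun_prop : Continuous fun s : ℝ => (1-s)^n))
      (integrable_of_cont τ hτc _ (cont_g n))]
    ring

private lemma g_nonneg {s : ℝ} (hs : s ∈ Set.Icc (0:ℝ) 1) (n : ℕ) :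
    0 ≤ ∑ i ∈ range n, (1-s)^i :=
  Finset.sum_nonneg fun i _ => pow_nonneg (by linarith [hs.2]) i

private lemma g_mono {s : ℝ} (hs : s ∈ Set.Icc (0:ℝ) 1) :
    Monotone fun n => ENNReal.ofReal (∑ i ∈ range n, (1-s)^i) := by
  intro m n hmn
  apply ENNReal.ofReal_le_ofReal
  apply Finset.sum_le_sum_of_subset_of_nonneg (Finset.range_subset_range.2 hmn)
  exact fun i _ _ => pow_nonneg (by linarith [hs.2]) i

private lemma sup_ofReal_g {s : ℝ} (hs : s ∈ Set.Icc (0:ℝ) 1) :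
    (⨆ n, ENNReal.ofReal (∑ i ∈ Finset.range n, (1-s)^i)) = (ENNReal.ofReal s)⁻¹ := by
  rcases eq_or_lt_of_le hs.1 with h0 | h0
  · rw [← h0]
    have h1 : ∀ n : ℕ, (∑ i ∈ Finset.range n, (1-(0:ℝ))^i) = (n : ℝ) := by
      intro n; simp
    simp only [h1, ENNReal.ofReal_natCast]
    rw [ENNReal.iSup_natCast]
    simp
  · have hsub : (1:ℝ) - s ≠ 1 := by linarith
    have habs : |1 - s| < 1 := by rw [abs_lt]; constructor <;> linarith [hs.2]
    have htend : Filter.Tendsto (fun n => ∑ i ∈ range n, (1-s)^i)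
        Filter.atTop (nhds (1/s)) := by
      have heq : ∀ n, ∑ i ∈ range n, (1-s)^i = ((1-s)^n - 1) / ((1-s) - 1) :=
        fun n => geom_sum_eq hsub n
      simp only [heq]
      have := ((tendsto_pow_atTop_nhds_zero_of_abs_lt_one habs).sub_const 1).div_const ((1-s) - 1)
      convert this using 2
      field_simp
      ring
    rw [iSup_eq_of_tendsto (g_mono hs) (ENNReal.tendsto_ofReal htend)]
    rw [one_div, ENNReal.ofReal_inv_of_pos h0]

private lemma lintegral_inv_eq (τ : Measure ℝ) [IsFiniteMeasure τ]
    (hτc : τ (Set.Icc (0:ℝ) 1)ᶜ = 0) :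
    ∫⁻ s : ℝ, (ENNReal.ofReal s)⁻¹ ∂τ
      = ⨆ n, ENNReal.ofReal (∫ s : ℝ, (∑ i ∈ range n, (1-s)^i) ∂τ) := by
  have hae := ae_mem_Icc τ hτc
  have h1 : ∫⁻ s : ℝ, (ENNReal.ofReal s)⁻¹ ∂τ
      = ∫⁻ s, ⨆ n, ENNReal.ofReal (∑ i ∈ range n, (1-s)^i) ∂τ :=
    lintegral_congr_ae (hae.mono fun s hs => (sup_ofReal_g hs).symm)
  rw [h1, lintegral_iSup'
    (fun n => ((cont_g n).measurable.ennreal_ofReal).aemeasurable)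
    (hae.mono fun s hs => g_mono hs)]
  refine iSup_congr fun n => ?_
  rw [ofReal_integral_eq_lintegral_ofReal (integrable_of_cont τ hτc _ (cont_g n))
    (hae.mono fun s hs => g_nonneg hs n)]

/-- Backward extendibility of completely alternating sequences: for a completely alternating
sequence `a` with representing measure `τ` and `a₋₁ = 1`, the shifted sequence `{a_{n-1}}` is
completely alternating iff `1 + ∫ (1/s) dτ(s) ≤ a₀` (convention `1/0 = ∞`); in that case
`τ({0}) = 0` and `ρ = (1/s) dτ + (a₀ - 1 - ∫ (1/s) dτ) δ₀` represents `{a_{n-1}}`. -/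
theorem stmt_17 (a : ℕ → ℝ) (τ : Measure ℝ)
    (ha : CompletelyAlternating a) (hτ : RepresentsCA τ a) :
    (CompletelyAlternating (fun n => if n = 0 then 1 else a (n - 1)) ↔
      1 + ∫⁻ s : ℝ, (ENNReal.ofReal s)⁻¹ ∂τ ≤ ENNReal.ofReal (a 0)) ∧
    (1 + ∫⁻ s : ℝ, (ENNReal.ofReal s)⁻¹ ∂τ ≤ ENNReal.ofReal (a 0) →
      τ {0} = 0 ∧
      RepresentsCA
        (τ.withDensity (fun s => (ENNReal.ofReal s)⁻¹) +
          (ENNReal.ofReal (a 0) - 1 - ∫⁻ s : ℝ, (ENNReal.ofReal s)⁻¹ ∂τ) •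
            Measure.dirac (0 : ℝ))
        (fun n => if n = 0 then 1 else a (n - 1))) := by
  obtain ⟨hτc, hτfin, hτrep⟩ := hτ
  haveI := hτfin
  set b : ℕ → ℝ := fun n => if n = 0 then 1 else a (n - 1) with hb
  have hrep : ∀ n : ℕ, a n = a 0 + ∫ s : ℝ, (∑ k ∈ Finset.range n, s ^ k) ∂τ := by
    intro n
    cases n with
    | zero => simp
    | succ n => exact hτrep (n+1) (by omega)
  set I := ∫⁻ s : ℝ, (ENNReal.ofReal s)⁻¹ ∂τ with hIdef
  have hIeq := lintegral_inv_eq τ hτc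
  have hae := ae_mem_Icc τ hτc
  -- forward direction
  have fwd : CompletelyAlternating b → 1 + I ≤ ENNReal.ofReal (a 0) := by
    intro hcb
    have hg : ∀ n, ∫ s : ℝ, (∑ i ∈ range n, (1-s)^i) ∂τ ≤ a 0 - 1 := by
      intro n
      have h0 : Ssum b 0 (n+1) ≤ 0 := hcb 0 (n+1) (by omega)
      rw [Ssum_b a τ hτc hrep n] at h0
      linarith
    have ha0 : (1:ℝ) ≤ a 0 := by have := hg 0; simp at this; linarith
    have hIle : I ≤ ENNReal.ofReal (a 0 - 1) := by
      rw [hIdef, hIeq]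
      exact iSup_le fun n => ENNReal.ofReal_le_ofReal (hg n)
    calc 1 + I ≤ 1 + ENNReal.ofReal (a 0 - 1) := add_le_add_right hIle 1
      _ = ENNReal.ofReal (a 0) := by
          rw [← ENNReal.ofReal_one, ← ENNReal.ofReal_add (by norm_num) (by linarith)]
          norm_num
  -- backward direction
  have bwd : 1 + I ≤ ENNReal.ofReal (a 0) → CompletelyAlternating b := by
    intro hle
    have ha0 : (1:ℝ) ≤ a 0 := ENNReal.one_le_ofReal.mp (le_trans le_self_add hle)
    have hIle : I ≤ ENNReal.ofReal (a 0 - 1) := by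
      rw [ENNReal.ofReal_sub _ (by norm_num : (0:ℝ) ≤ 1), ENNReal.ofReal_one]
      exact ENNReal.le_sub_of_add_le_left (by simp) hle
    intro m n hn
    cases m with
    | zero =>
      cases n with
      | zero => omega
      | succ n =>
        show Ssum b 0 (n+1) ≤ 0
        rw [Ssum_b a τ hτc hrep n]
        have h1 : ENNReal.ofReal (∫ s : ℝ, (∑ i ∈ range n, (1-s)^i) ∂τ)
            ≤ ENNReal.ofReal (a 0 - 1) := by
          refine le_trans ?_ hIle
          rw [hIdef, hIeq]
          exact le_iSup (fun n => ENNReal.ofReal (∫ s : ℝ, (∑ i ∈ range n, (1-s)^i) ∂τ)) n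
        have h2 := (ENNReal.ofReal_le_ofReal_iff (by linarith)).mp h1
        linarith
    | succ m =>
      show Ssum b (m+1) n ≤ 0
      rw [hb, Ssum_shift]
      exact ha m n hn
  refine ⟨⟨fwd, bwd⟩, ?_⟩
  intro hle
  have hItop : I ≠ ⊤ := by
    intro h
    rw [h, add_top] at hle
    exact ENNReal.ofReal_ne_top (top_le_iff.mp hle)
  have ha0 : (1:ℝ) ≤ a 0 := ENNReal.one_le_ofReal.mp (le_trans le_self_add hle)
  have hIle : I ≤ ENNReal.ofReal (a 0) - 1 := ENNReal.le_sub_of_add_le_left (by simp) hle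
  -- τ {0} = 0
  have ht0 : τ {0} = 0 := by
    by_contra hne
    have h0 : (ENNReal.ofReal (0:ℝ))⁻¹ * τ {0} ≤ I := by
      rw [← lintegral_singleton (fun s => (ENNReal.ofReal s)⁻¹) 0]
      exact setLIntegral_le_lintegral _ _
    rw [ENNReal.ofReal_zero, ENNReal.inv_zero, ENNReal.top_mul hne] at h0
    exact hItop (top_le_iff.mp h0)
  refine ⟨ht0, ?_⟩
  set c : ENNReal := ENNReal.ofReal (a 0) - 1 - I with hcdef
  set d : ℝ → ENNReal := fun s => (ENNReal.ofReal s)⁻¹ with hddef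
  have hdm : Measurable d := ENNReal.measurable_ofReal.inv
  set ρ : Measure ℝ := τ.withDensity d + c • Measure.dirac (0:ℝ) with hρdef
  have hρc : ρ (Set.Icc (0:ℝ) 1)ᶜ = 0 := by
    rw [hρdef, Measure.add_apply, withDensity_apply _ measurableSet_Icc.compl,
      setLIntegral_measure_zero _ _ hτc, Measure.smul_apply,
      Measure.dirac_apply' _ measurableSet_Icc.compl]
    have h01 : (0:ℝ) ∉ (Set.Icc (0:ℝ) 1)ᶜ := by simp
    rw [Set.indicator_of_notMem h01]
    simp
  have hcfin : c ≠ ⊤ := by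
    rw [hcdef]
    exact fun h => ENNReal.ofReal_ne_top
      (top_le_iff.mp (le_trans (le_of_eq h.symm) (le_trans tsub_le_self tsub_le_self)))
  haveI hρfin : IsFiniteMeasure ρ := by
    constructor
    rw [hρdef, Measure.add_apply, withDensity_apply _ MeasurableSet.univ,
      Measure.restrict_univ, Measure.smul_apply, smul_eq_mul]
    simp only [measure_univ, mul_one]
    exact ENNReal.add_lt_top.mpr ⟨lt_top_iff_ne_top.mpr hItop, lt_top_iff_ne_top.mpr hcfin⟩
  refine ⟨hρc, hρfin, ?_⟩
  intro n hn
  obtain ⟨k, rfl⟩ : ∃ k, n = k + 1 := ⟨n - 1, by omega⟩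
  show a k = b 0 + ∫ s : ℝ, (∑ j ∈ range (k+1), s^j) ∂ρ
  have hb0 : b 0 = 1 := rfl
  rw [hb0]
  -- basic facts
  have hρae : ∀ᵐ s ∂ρ, s ∈ Set.Icc (0:ℝ) 1 := ae_mem_Icc ρ hρc
  have hInt : Integrable (fun s : ℝ => ∑ j ∈ range (k+1), s^j) ρ :=
    integrable_of_cont ρ hρc _ (cont_geom (k+1))
  have hnn : 0 ≤ᵐ[ρ] fun s : ℝ => ∑ j ∈ range (k+1), s^j :=
    hρae.mono fun s hs => Finset.sum_nonneg fun j _ => pow_nonneg hs.1 j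
  have hIntnn : 0 ≤ ∫ s : ℝ, (∑ j ∈ range (k+1), s^j) ∂ρ := integral_nonneg_of_ae hnn
  have hak : a 0 ≤ a k := by
    have h1 : 0 ≤ ∫ s : ℝ, (∑ j ∈ range k, s^j) ∂τ :=
      integral_nonneg_of_ae (hae.mono fun s hs => Finset.sum_nonneg fun j _ => pow_nonneg hs.1 j)
    rw [hrep k]; linarith
  -- the key lintegral computation
  have hane : ∀ᵐ s ∂τ, s ≠ 0 := by
    rw [ae_iff]
    convert ht0 using 2
    ext s
    simp
  have key2 : ∫⁻ s : ℝ, d s * ENNReal.ofReal (∑ j ∈ range (k+1), s^j) ∂τ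
      = I + ∫⁻ s : ℝ, ENNReal.ofReal (∑ j ∈ range k, s^j) ∂τ := by
    have hpt : ∀ᵐ s ∂τ, d s * ENNReal.ofReal (∑ j ∈ range (k+1), s^j)
        = d s + ENNReal.ofReal (∑ j ∈ range k, s^j) := by
      filter_upwards [hae, hane] with s hs hs0
      have hspos : 0 < s := lt_of_le_of_ne hs.1 (Ne.symm hs0)
      have hq : (0:ℝ) ≤ ∑ j ∈ range k, s^j :=
        Finset.sum_nonneg fun j _ => pow_nonneg hs.1 j
      rw [geom_sum_succ]
      rw [ENNReal.ofReal_add (mul_nonneg hs.1 hq) (by norm_num), ENNReal.ofReal_mul hs.1]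
      rw [ENNReal.ofReal_one, mul_add, mul_one, ← mul_assoc, hddef]
      rw [ENNReal.inv_mul_cancel (ENNReal.ofReal_pos.mpr hspos).ne' ENNReal.ofReal_ne_top]
      rw [one_mul, add_comm]
    rw [lintegral_congr_ae hpt, lintegral_add_left hdm]
  have hq_int : ∫⁻ s : ℝ, ENNReal.ofReal (∑ j ∈ range k, s^j) ∂τ
      = ENNReal.ofReal (a k - a 0) := by
    rw [← ofReal_integral_eq_lintegral_ofReal (integrable_of_cont τ hτc _ (cont_geom k))
      (hae.mono fun s hs => Finset.sum_nonneg fun j _ => pow_nonneg hs.1 j)]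
    congr 1
    rw [hrep k]; ring
  have key : ENNReal.ofReal (∫ s : ℝ, (∑ j ∈ range (k+1), s^j) ∂ρ)
      = ENNReal.ofReal (a k - 1) := by
    rw [ofReal_integral_eq_lintegral_ofReal hInt hnn]
    rw [hρdef, lintegral_add_measure, lintegral_smul_measure,
      lintegral_withDensity_eq_lintegral_mul τ hdm (cont_geom (k+1)).measurable.ennreal_ofReal]
    have hdirac : ∫⁻ s : ℝ, ENNReal.ofReal (∑ j ∈ range (k+1), s^j) ∂(Measure.dirac 0)
        = 1 := by
      rw [lintegral_dirac]
      rw [geom_sum_succ]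
      norm_num
    rw [hdirac, smul_eq_mul, mul_one]
    have : (fun s : ℝ => (d * fun s : ℝ => ENNReal.ofReal (∑ j ∈ range (k+1), s^j)) s)
        = fun s : ℝ => d s * ENNReal.ofReal (∑ j ∈ range (k+1), s^j) := rfl
    rw [this, key2, hq_int]
    -- now: (I + ofReal (a k - a 0)) + c = ofReal (a k - 1)
    rw [hcdef]
    have h1 : ENNReal.ofReal (a 0) - 1 - I + I = ENNReal.ofReal (a 0) - 1 :=
      tsub_add_cancel_of_le hIle
    calc I + ENNReal.ofReal (a k - a 0) + (ENNReal.ofReal (a 0) - 1 - I)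
        = ENNReal.ofReal (a k - a 0) + ((ENNReal.ofReal (a 0) - 1 - I) + I) := by ring
      _ = ENNReal.ofReal (a k - a 0) + (ENNReal.ofReal (a 0) - 1) := by rw [h1]
      _ = ENNReal.ofReal (a k - a 0) + ENNReal.ofReal (a 0 - 1) := by
          rw [ENNReal.ofReal_sub _ (by norm_num : (0:ℝ) ≤ 1), ENNReal.ofReal_one]
      _ = ENNReal.ofReal (a k - 1) := by
          rw [← ENNReal.ofReal_add (by linarith) (by linarith)]
          congr 1
          ring
  have hfinal := (ENNReal.ofReal_eq_ofReal_iff hIntnn (by linarith)).mp key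
  linarith
end

section
/- A bounded weighted shift S_λ on a directed tree T is hyponormal if and only if for every vertex u: (a) every child v of u with ‖S_λ e_v‖ = 0 satisfies λ_v = 0, and (b) Σ_{v ∈ Chi⁺(u)} |λ_v|²/‖S_λ e_v‖² ≤ 1, where Chi⁺(u) = {v ∈ Chi(u) : ‖S_λ e_v‖ > 0}. -/
open scoped ENNReal NNReal

section Stmt18Aux

open scoped ENNReal NNReal

variable {V : Type} [DecidableEq V] (T : DirectedTree V) (lam : V → ℂ)

private lemma choose_eq {u v : V} (huv : T.E u v) (h : ∃ w, T.E w v) : h.choose = u :=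
  (T.parentUnique v ⟨u, huv⟩).unique h.choose_spec huv

variable (S : lp (fun _ : V => ℂ) 2 →L[ℂ] lp (fun _ : V => ℂ) 2)

private lemma apply_edge (hS : ∀ (f : lp (fun _ : V => ℂ) 2) (v : V), S f v = lambdaT T lam ⇑f v)
    {u v : V} (huv : T.E u v) (f : lp (fun _ : V => ℂ) 2) : S f v = lam v * f u := by
  rw [hS, lambdaT]
  rw [dif_pos ⟨u, huv⟩, choose_eq T huv]

private lemma apply_root (hS : ∀ (f : lp (fun _ : V => ℂ) 2) (v : V), S f v = lambdaT T lam ⇑f v)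
    {v : V} (hv : ¬ ∃ u, T.E u v) (f : lp (fun _ : V => ℂ) 2) : S f v = 0 := by
  rw [hS, lambdaT, dif_neg hv]

private lemma norm_sq_eq (g : lp (fun _ : V => ℂ) 2) :
    (‖g‖₊ : ℝ≥0∞) ^ 2 = ∑' v, (‖g v‖₊ : ℝ≥0∞) ^ 2 := by
  have hs := lp.hasSum_norm (p := 2) (by norm_num) g
  simp only [ENNReal.toReal_ofNat] at hs
  have hs' : HasSum (fun v => ((‖g v‖₊ ^ 2 : ℝ≥0) : ℝ)) ((‖g‖₊ ^ 2 : ℝ≥0) : ℝ) := by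
    push_cast
    convert hs using 2 with v
    · rw [← Real.rpow_natCast]; norm_num
    · rw [← Real.rpow_natCast]; norm_num
  have hnn : HasSum (fun v => (‖g v‖₊ ^ 2 : ℝ≥0)) (‖g‖₊ ^ 2) := NNReal.hasSum_coe.mp hs'
  calc (‖g‖₊ : ℝ≥0∞) ^ 2 = ((‖g‖₊ ^ 2 : ℝ≥0) : ℝ≥0∞) := by push_cast; ring
    _ = ∑' v, ((‖g v‖₊ ^ 2 : ℝ≥0) : ℝ≥0∞) := by
        rw [← hnn.tsum_eq, ENNReal.coe_tsum hnn.summable]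
    _ = ∑' v, (‖g v‖₊ : ℝ≥0∞) ^ 2 := by push_cast; ring_nf

/-- Regrouping a sum over vertices by parents. -/
private lemma group_sum (F : V → ℝ≥0∞) (hF : ∀ v, ¬ (∃ u, T.E u v) → F v = 0) :
    ∑' v, F v = ∑' u, ∑' w : {v // T.E u v}, F ↑w := by
  have hinj : Function.Injective
      (fun p : Σ u : V, {v // T.E u v} => (p.2 : V)) := by
    rintro ⟨u, v, hv⟩ ⟨u', v', hv'⟩ h
    simp only at h
    subst h
    have : u = u' := (T.parentUnique v ⟨u, hv⟩).unique hv hv'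
    subst this
    rfl
  have hsupp : Function.support F ⊆
      Set.range (fun p : Σ u : V, {v // T.E u v} => (p.2 : V)) := by
    intro v hv
    have hex : ∃ u, T.E u v := by
      by_contra hne
      exact hv (hF v hne)
    obtain ⟨u, hu⟩ := hex
    exact ⟨⟨u, ⟨v, hu⟩⟩, rfl⟩
  rw [← Function.Injective.tsum_eq hinj hsupp, ENNReal.tsum_sigma']

private lemma normS_single (hS : ∀ (f : lp (fun _ : V => ℂ) 2) (v : V),
      S f v = lambdaT T lam ⇑f v) (u : V) :
    (‖S (lp.single 2 u (1 : ℂ))‖₊ : ℝ≥0∞) ^ 2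
      = ∑' w : {v // T.E u v}, (‖lam ↑w‖₊ : ℝ≥0∞) ^ 2 := by
  rw [norm_sq_eq]
  rw [← tsum_subtype_eq_of_support_subset
    (s := {v | T.E u v}) ?_]
  · refine tsum_congr fun w => ?_
    rw [apply_edge T lam S hS w.2]
    simp [lp.single_apply_self]
  · intro v hv
    have h1 : S (lp.single 2 u (1:ℂ)) v ≠ 0 := by
      intro h0
      apply hv
      simp [h0]
    have hex : ∃ w, T.E w v := by
      by_contra hne
      exact h1 (apply_root T lam S hS hne _)
    obtain ⟨w, hw⟩ := hex
    have := apply_edge T lam S hS hw (lp.single 2 u (1:ℂ))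
    by_cases hwu : w = u
    · exact hwu ▸ hw
    · exfalso
      apply h1
      rw [this, lp.single_apply_ne 2 u _ hwu, mul_zero]

private lemma normS_eq (hS : ∀ (f : lp (fun _ : V => ℂ) 2) (v : V),
      S f v = lambdaT T lam ⇑f v) (f : lp (fun _ : V => ℂ) 2) :
    (‖S f‖₊ : ℝ≥0∞) ^ 2
      = ∑' u, (‖S (lp.single 2 u (1 : ℂ))‖₊ : ℝ≥0∞) ^ 2 * (‖f u‖₊ : ℝ≥0∞) ^ 2 := by
  rw [norm_sq_eq]
  rw [group_sum T (fun v => (‖S f v‖₊ : ℝ≥0∞) ^ 2) ?_]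
  · refine tsum_congr fun u => ?_
    rw [normS_single T lam S hS, ← ENNReal.tsum_mul_right]
    refine tsum_congr fun w => ?_
    rw [apply_edge T lam S hS w.2]
    push_cast [nnnorm_mul]
    ring
  · intro v hv
    have := apply_root T lam S hS hv f
    simp [this]

/-- Cauchy-Schwarz for `ℝ≥0∞`-valued tsums. -/
private lemma cs_tsum {ι : Type} (a b : ι → ℝ≥0∞) :
    ∑' i, a i * b i ≤ (∑' i, a i ^ (2:ℝ)) ^ (1/2:ℝ) * (∑' i, b i ^ (2:ℝ)) ^ (1/2:ℝ) := by
  rw [ENNReal.tsum_eq_iSup_sum]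
  refine iSup_le fun s => le_trans
    (ENNReal.inner_le_Lp_mul_Lq (p := 2) (q := 2) s a b (Real.holderConjugate_iff.mpr ⟨one_lt_two, by norm_num⟩)) ?_
  refine mul_le_mul' ?_ ?_ <;>
    exact ENNReal.rpow_le_rpow (ENNReal.sum_le_tsum s) (by norm_num)

private lemma rpow_half_sq (x : ℝ≥0∞) : (x ^ (1/2:ℝ)) ^ (2:ℝ) = x := by
  rw [← ENNReal.rpow_mul]; norm_num

private lemma sq_rpow_half (x : ℝ≥0∞) : (x ^ (2:ℕ)) ^ (1/2:ℝ) = x := by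
  rw [← ENNReal.rpow_natCast x 2, ← ENNReal.rpow_mul]; norm_num

private lemma rpow_half_ne_zero {x : ℝ≥0∞} (hx : x ≠ 0) : x ^ (1/2:ℝ) ≠ 0 := by
  simp [ENNReal.rpow_eq_zero_iff, hx]

private lemma rpow_half_ne_top {x : ℝ≥0∞} (hx : x ≠ ⊤) : x ^ (1/2:ℝ) ≠ ⊤ := by
  simp [ENNReal.rpow_eq_top_iff, hx]

private lemma chi_restrict (u : V) (G : V → ℝ≥0∞)
    (hG : ∀ v, T.E u v → ¬ 0 < ‖S (lp.single 2 v (1:ℂ))‖ → G v = 0) :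
    ∑' w : {v : V // T.E u v ∧ 0 < ‖S (lp.single 2 v (1:ℂ))‖}, G ↑w
      = ∑' w : {v : V // T.E u v}, G ↑w := by
  have hinj : Function.Injective
      (fun w : {v : V // T.E u v ∧ 0 < ‖S (lp.single 2 v (1:ℂ))‖} =>
        (⟨↑w, w.2.1⟩ : {v : V // T.E u v})) := by
    rintro ⟨v, hv⟩ ⟨v', hv'⟩ h
    simpa using Subtype.ext_iff.mp h
  refine Function.Injective.tsum_eq (f := fun w : {v : V // T.E u v} => G ↑w) hinj ?_
  intro w hw
  have hpos : 0 < ‖S (lp.single 2 (↑w : V) (1:ℂ))‖ := by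
    by_contra hneg
    exact hw (hG ↑w w.2 hneg)
  exact ⟨⟨↑w, w.2, hpos⟩, rfl⟩

private lemma inner_cs
    (hS : ∀ (f : lp (fun _ : V => ℂ) 2) (v : V), S f v = lambdaT T lam ⇑f v)
    (ha : ∀ u v : V, T.E u v → ‖S (lp.single 2 v (1 : ℂ))‖ = 0 → lam v = 0)
    (hb : ∀ u : V, ∑' v : {v : V // T.E u v ∧ 0 < ‖S (lp.single 2 v (1 : ℂ))‖},
            (‖lam (v : V)‖₊ : ℝ≥0∞) ^ 2 / (‖S (lp.single 2 (v : V) (1 : ℂ))‖₊ : ℝ≥0∞) ^ 2 ≤ 1)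
    (f : lp (fun _ : V => ℂ) 2) (u : V) :
    ∑' w : {v : V // T.E u v}, (‖lam ↑w‖₊ : ℝ≥0∞) * (‖f ↑w‖₊ : ℝ≥0∞)
      ≤ (∑' w : {v : V // T.E u v},
          (‖S (lp.single 2 (↑w : V) (1:ℂ))‖₊ : ℝ≥0∞) ^ 2 * (‖f ↑w‖₊ : ℝ≥0∞) ^ 2) ^ (1/2:ℝ) := by
  have hNt : ∀ v : V, ((‖S (lp.single 2 v (1:ℂ))‖₊ : ℝ≥0∞) ^ 2) ≠ ⊤ := by
    intro v
    exact ENNReal.pow_ne_top ENNReal.coe_ne_top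
  set a : {v : V // T.E u v} → ℝ≥0∞ :=
    fun w => (‖lam ↑w‖₊ : ℝ≥0∞) / ((‖S (lp.single 2 (↑w:V) (1:ℂ))‖₊ : ℝ≥0∞) ^ 2) ^ (1/2:ℝ)
    with hadef
  set b : {v : V // T.E u v} → ℝ≥0∞ :=
    fun w => ((‖S (lp.single 2 (↑w:V) (1:ℂ))‖₊ : ℝ≥0∞) ^ 2) ^ (1/2:ℝ) * (‖f ↑w‖₊ : ℝ≥0∞)
    with hbdef
  have hpt : ∀ w : {v : V // T.E u v}, (‖lam ↑w‖₊ : ℝ≥0∞) * (‖f ↑w‖₊ : ℝ≥0∞) ≤ a w * b w := by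
    intro w
    rcases eq_or_lt_of_le (norm_nonneg (S (lp.single 2 (↑w:V) (1:ℂ)))) with h0 | hpos
    · have hz : lam ↑w = 0 := ha u ↑w w.2 h0.symm
      simp [hz]
    · have hs0 : ((‖S (lp.single 2 (↑w:V) (1:ℂ))‖₊ : ℝ≥0∞) ^ 2) ^ (1/2:ℝ) ≠ 0 := by
        apply rpow_half_ne_zero
        simp [pow_eq_zero_iff, nnnorm_eq_zero]
        intro h
        rw [h] at hpos
        simp at hpos
      have hst : ((‖S (lp.single 2 (↑w:V) (1:ℂ))‖₊ : ℝ≥0∞) ^ 2) ^ (1/2:ℝ) ≠ ⊤ :=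
        rpow_half_ne_top (hNt _)
      refine le_of_eq ?_
      rw [hadef, hbdef]
      simp only []
      rw [div_eq_mul_inv, mul_assoc,
        ← mul_assoc (((‖S (lp.single 2 (↑w:V) (1:ℂ))‖₊ : ℝ≥0∞) ^ 2) ^ (1/2:ℝ))⁻¹,
        ENNReal.inv_mul_cancel hs0 hst, one_mul]
  have hA : ∑' w, a w ^ (2:ℝ) ≤ 1 := by
    have heq : ∀ w : {v : V // T.E u v}, a w ^ (2:ℝ)
        = (‖lam ↑w‖₊ : ℝ≥0∞) ^ 2 / ((‖S (lp.single 2 (↑w:V) (1:ℂ))‖₊ : ℝ≥0∞) ^ 2) := by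
      intro w
      rw [hadef]
      simp only []
      rw [ENNReal.div_rpow_of_nonneg _ _ (by norm_num : (0:ℝ) ≤ 2), rpow_half_sq]
      congr 1
      rw [← ENNReal.rpow_natCast (‖lam ↑w‖₊ : ℝ≥0∞) 2]
      norm_num
    rw [tsum_congr heq]
    rw [← chi_restrict T S u
      (fun v => (‖lam v‖₊ : ℝ≥0∞) ^ 2 / ((‖S (lp.single 2 v (1:ℂ))‖₊ : ℝ≥0∞) ^ 2)) ?_]
    · exact hb u
    · intro v hv hnp
      have h0 : ‖S (lp.single 2 v (1:ℂ))‖ = 0 :=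
        le_antisymm (not_lt.mp hnp) (norm_nonneg _)
      have hz : lam v = 0 := ha u v hv h0
      simp [hz]
  have hB : ∀ w : {v : V // T.E u v}, b w ^ (2:ℝ)
      = (‖S (lp.single 2 (↑w:V) (1:ℂ))‖₊ : ℝ≥0∞) ^ 2 * (‖f ↑w‖₊ : ℝ≥0∞) ^ 2 := by
    intro w
    rw [hbdef]
    simp only []
    rw [ENNReal.mul_rpow_of_nonneg _ _ (by norm_num : (0:ℝ) ≤ 2), rpow_half_sq]
    congr 1
    rw [← ENNReal.rpow_natCast (‖f ↑w‖₊ : ℝ≥0∞) 2]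
    norm_num
  calc ∑' w : {v : V // T.E u v}, (‖lam ↑w‖₊ : ℝ≥0∞) * (‖f ↑w‖₊ : ℝ≥0∞)
      ≤ ∑' w, a w * b w := ENNReal.tsum_le_tsum hpt
    _ ≤ (∑' w, a w ^ (2:ℝ)) ^ (1/2:ℝ) * (∑' w, b w ^ (2:ℝ)) ^ (1/2:ℝ) := cs_tsum a b
    _ ≤ (1:ℝ≥0∞) ^ (1/2:ℝ) * (∑' w, b w ^ (2:ℝ)) ^ (1/2:ℝ) :=
        mul_le_mul' (ENNReal.rpow_le_rpow hA (by norm_num)) le_rfl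
    _ = (∑' w, b w ^ (2:ℝ)) ^ (1/2:ℝ) := by rw [ENNReal.one_rpow, one_mul]
    _ = (∑' w : {v : V // T.E u v},
          (‖S (lp.single 2 (↑w : V) (1:ℂ))‖₊ : ℝ≥0∞) ^ 2 * (‖f ↑w‖₊ : ℝ≥0∞) ^ 2) ^ (1/2:ℝ) := by
        rw [tsum_congr hB]

private lemma key
    (hS : ∀ (f : lp (fun _ : V => ℂ) 2) (v : V), S f v = lambdaT T lam ⇑f v)
    (ha : ∀ u v : V, T.E u v → ‖S (lp.single 2 v (1 : ℂ))‖ = 0 → lam v = 0)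
    (hb : ∀ u : V, ∑' v : {v : V // T.E u v ∧ 0 < ‖S (lp.single 2 v (1 : ℂ))‖},
            (‖lam (v : V)‖₊ : ℝ≥0∞) ^ 2 / (‖S (lp.single 2 (v : V) (1 : ℂ))‖₊ : ℝ≥0∞) ^ 2 ≤ 1)
    (f g : lp (fun _ : V => ℂ) 2) :
    (‖(@inner ℂ _ _ f (S g) : ℂ)‖₊ : ℝ≥0∞) ≤ (‖g‖₊ : ℝ≥0∞) * (‖S f‖₊ : ℝ≥0∞) := by
  classical
  have hsummul : Summable fun v => ‖f v‖ * ‖(S g : lp (fun _ : V => ℂ) 2) v‖ :=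
    lp.summable_mul (by rw [Real.holderConjugate_iff]; norm_num) f (S g)
  have hsum2 : Summable fun v => ‖(@inner ℂ _ _ (f v) ((S g : lp (fun _ : V => ℂ) 2) v) : ℂ)‖₊ := by
    rw [← NNReal.summable_coe]
    refine Summable.of_nonneg_of_le (fun v => by positivity) (fun v => ?_) hsummul
    push_cast
    exact norm_inner_le_norm _ _
  have h1 : (‖(@inner ℂ _ _ f (S g) : ℂ)‖₊ : ℝ≥0∞)
      ≤ ∑' v, (‖f v‖₊ : ℝ≥0∞) * (‖(S g : lp (fun _ : V => ℂ) 2) v‖₊ : ℝ≥0∞) := by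
    rw [lp.inner_eq_tsum]
    calc ((‖∑' v, @inner ℂ _ _ (f v) ((S g : lp (fun _ : V => ℂ) 2) v)‖₊ : ℝ≥0∞))
        ≤ ((∑' v, ‖(@inner ℂ _ _ (f v) ((S g : lp (fun _ : V => ℂ) 2) v) : ℂ)‖₊ : ℝ≥0) : ℝ≥0∞) :=
          ENNReal.coe_le_coe.mpr (nnnorm_tsum_le hsum2)
      _ = ∑' v, (‖(@inner ℂ _ _ (f v) ((S g : lp (fun _ : V => ℂ) 2) v) : ℂ)‖₊ : ℝ≥0∞) :=
          ENNReal.coe_tsum hsum2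
      _ ≤ ∑' v, (‖f v‖₊ : ℝ≥0∞) * (‖(S g : lp (fun _ : V => ℂ) 2) v‖₊ : ℝ≥0∞) := by
          refine ENNReal.tsum_le_tsum fun v => ?_
          rw [RCLike.inner_apply]
          simp [nnnorm_mul]
          exact le_of_eq (mul_comm _ _)
  have h2 : ∑' v, (‖f v‖₊ : ℝ≥0∞) * (‖(S g : lp (fun _ : V => ℂ) 2) v‖₊ : ℝ≥0∞)
      = ∑' u, (∑' w : {v : V // T.E u v}, (‖lam ↑w‖₊ : ℝ≥0∞) * (‖f ↑w‖₊ : ℝ≥0∞))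
          * (‖g u‖₊ : ℝ≥0∞) := by
    rw [group_sum T _ (fun v hv => by
      have := apply_root T lam S hS hv g
      simp [this])]
    refine tsum_congr fun u => ?_
    rw [← ENNReal.tsum_mul_right]
    refine tsum_congr fun w => ?_
    rw [apply_edge T lam S hS w.2]
    push_cast [nnnorm_mul]
    ring
  set B : V → ℝ≥0∞ := fun u => ∑' w : {v : V // T.E u v},
    (‖S (lp.single 2 (↑w:V) (1:ℂ))‖₊ : ℝ≥0∞) ^ 2 * (‖f ↑w‖₊ : ℝ≥0∞) ^ 2 with hBdef
  have h3 : ∀ u, (∑' w : {v : V // T.E u v}, (‖lam ↑w‖₊ : ℝ≥0∞) * (‖f ↑w‖₊ : ℝ≥0∞))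
      * (‖g u‖₊ : ℝ≥0∞) ≤ B u ^ (1/2:ℝ) * (‖g u‖₊ : ℝ≥0∞) :=
    fun u => mul_le_mul_left (inner_cs T lam S hS ha hb f u) _
  have h6 : ∑' u, B u ≤ (‖S f‖₊ : ℝ≥0∞) ^ 2 := by
    have hgr := group_sum T (fun v => if ∃ u, T.E u v then
        (‖S (lp.single 2 v (1:ℂ))‖₊ : ℝ≥0∞) ^ 2 * (‖f v‖₊ : ℝ≥0∞) ^ 2 else 0)
      (fun v hv => if_neg hv)
    have heq : ∑' u, B u = ∑' v, (if ∃ u, T.E u v then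
        (‖S (lp.single 2 v (1:ℂ))‖₊ : ℝ≥0∞) ^ 2 * (‖f v‖₊ : ℝ≥0∞) ^ 2 else 0) := by
      rw [hgr]
      exact tsum_congr fun u => tsum_congr fun w => (if_pos ⟨u, w.2⟩).symm
    rw [heq, normS_eq T lam S hS f]
    refine ENNReal.tsum_le_tsum fun v => ?_
    split_ifs
    · exact le_rfl
    · exact zero_le
  have h7 : ∑' u, ((‖g u‖₊ : ℝ≥0∞)) ^ (2:ℝ) = (‖g‖₊ : ℝ≥0∞) ^ 2 := by
    rw [norm_sq_eq]
    refine tsum_congr fun u => ?_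
    rw [← ENNReal.rpow_natCast (‖g u‖₊ : ℝ≥0∞) 2]
    norm_num
  calc (‖(@inner ℂ _ _ f (S g) : ℂ)‖₊ : ℝ≥0∞)
      ≤ ∑' v, (‖f v‖₊ : ℝ≥0∞) * (‖(S g : lp (fun _ : V => ℂ) 2) v‖₊ : ℝ≥0∞) := h1
    _ = ∑' u, (∑' w : {v : V // T.E u v}, (‖lam ↑w‖₊ : ℝ≥0∞) * (‖f ↑w‖₊ : ℝ≥0∞))
          * (‖g u‖₊ : ℝ≥0∞) := h2
    _ ≤ ∑' u, B u ^ (1/2:ℝ) * (‖g u‖₊ : ℝ≥0∞) := ENNReal.tsum_le_tsum h3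
    _ ≤ (∑' u, (B u ^ (1/2:ℝ)) ^ (2:ℝ)) ^ (1/2:ℝ)
          * (∑' u, ((‖g u‖₊ : ℝ≥0∞)) ^ (2:ℝ)) ^ (1/2:ℝ) := cs_tsum _ _
    _ = (∑' u, B u) ^ (1/2:ℝ) * ((‖g‖₊ : ℝ≥0∞) ^ 2) ^ (1/2:ℝ) := by
        rw [tsum_congr (fun u => rpow_half_sq (B u)), h7]
    _ ≤ ((‖S f‖₊ : ℝ≥0∞) ^ 2) ^ (1/2:ℝ) * ((‖g‖₊ : ℝ≥0∞) ^ 2) ^ (1/2:ℝ) :=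
        mul_le_mul' (ENNReal.rpow_le_rpow h6 (by norm_num)) le_rfl
    _ = (‖g‖₊ : ℝ≥0∞) * (‖S f‖₊ : ℝ≥0∞) := by
        rw [sq_rpow_half, sq_rpow_half, mul_comm]

private lemma hypo_of
    (hS : ∀ (f : lp (fun _ : V => ℂ) 2) (v : V), S f v = lambdaT T lam ⇑f v)
    (ha : ∀ u v : V, T.E u v → ‖S (lp.single 2 v (1 : ℂ))‖ = 0 → lam v = 0)
    (hb : ∀ u : V, ∑' v : {v : V // T.E u v ∧ 0 < ‖S (lp.single 2 v (1 : ℂ))‖},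
            (‖lam (v : V)‖₊ : ℝ≥0∞) ^ 2 / (‖S (lp.single 2 (v : V) (1 : ℂ))‖₊ : ℝ≥0∞) ^ 2 ≤ 1)
    (f : lp (fun _ : V => ℂ) 2) :
    ‖(ContinuousLinearMap.adjoint S) f‖ ≤ ‖S f‖ := by
  set g := (ContinuousLinearMap.adjoint S) f with hg
  have h2 : (@inner ℂ _ _ g g : ℂ) = @inner ℂ _ _ f (S g) :=
    ContinuousLinearMap.adjoint_inner_left S g f
  have hk : ‖(@inner ℂ _ _ f (S g) : ℂ)‖ ≤ ‖g‖ * ‖S f‖ := by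
    have hkey := key T lam S hS ha hb f g
    rw [← ENNReal.coe_mul] at hkey
    exact_mod_cast hkey
  have hsq : ‖g‖ ^ 2 ≤ ‖g‖ * ‖S f‖ := by
    have h3 : (@inner ℂ _ _ g g : ℂ) = ((‖g‖ : ℂ)) ^ 2 := inner_self_eq_norm_sq_to_K g
    have h4 : ‖(@inner ℂ _ _ g g : ℂ)‖ = ‖g‖ ^ 2 := by
      rw [h3]
      rw [norm_pow]
      norm_num
    rw [← h4, h2]
    exact hk
  rcases eq_or_lt_of_le (norm_nonneg g) with h0 | hpos
  · rw [← h0]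
    exact norm_nonneg _
  · nlinarith [hsq, hpos]

private lemma norm_single_one (u : V) :
    ‖(lp.single 2 u (1:ℂ) : lp (fun _ : V => ℂ) 2)‖ = 1 := by
  have h : ‖lp.single (E := fun _ : V => ℂ) 2 u ((fun _ => (1:ℂ)) u)‖ = ‖(fun _ => (1:ℂ)) u‖ :=
    lp.norm_single (E := fun _ : V => ℂ) (by norm_num) u ((fun _ => (1:ℂ)) u)
  simpa using h

private lemma fwd_a
    (hS : ∀ (f : lp (fun _ : V => ℂ) 2) (v : V), S f v = lambdaT T lam ⇑f v)
    (hyp : ∀ f : lp (fun _ : V => ℂ) 2, ‖ContinuousLinearMap.adjoint S f‖ ≤ ‖S f‖)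
    (u v : V) (huv : T.E u v) (h0 : ‖S (lp.single 2 v (1:ℂ))‖ = 0) : lam v = 0 := by
  have h1 : (@inner ℂ _ _ (lp.single 2 v (1:ℂ) : lp (fun _ : V => ℂ) 2)
      (S (lp.single 2 u (1:ℂ))) : ℂ) = lam v := by
    rw [lp.inner_single_left, apply_edge T lam S hS huv]
    simp [lp.single_apply_self, RCLike.inner_apply]
  have h2 : (@inner ℂ _ _ ((ContinuousLinearMap.adjoint S) (lp.single 2 v (1:ℂ)))
      (lp.single 2 u (1:ℂ) : lp (fun _ : V => ℂ) 2) : ℂ) = lam v := by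
    rw [ContinuousLinearMap.adjoint_inner_left]
    exact h1
  have h3 : ‖lam v‖ ≤ ‖(ContinuousLinearMap.adjoint S) (lp.single 2 v (1:ℂ))‖
      * ‖(lp.single 2 u (1:ℂ) : lp (fun _ : V => ℂ) 2)‖ := h2 ▸ norm_inner_le_norm _ _
  rw [norm_single_one, mul_one] at h3
  have h4 : ‖(ContinuousLinearMap.adjoint S) (lp.single 2 v (1:ℂ))‖ ≤ 0 := h0 ▸ hyp _
  have h5 : ‖lam v‖ ≤ 0 := h3.trans h4
  simpa using le_antisymm h5 (norm_nonneg _)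

set_option maxHeartbeats 1000000 in
private lemma fwd_b
    (hS : ∀ (f : lp (fun _ : V => ℂ) 2) (v : V), S f v = lambdaT T lam ⇑f v)
    (hyp : ∀ f : lp (fun _ : V => ℂ) 2, ‖ContinuousLinearMap.adjoint S f‖ ≤ ‖S f‖)
    (u : V) :
    ∑' v : {v : V // T.E u v ∧ 0 < ‖S (lp.single 2 v (1 : ℂ))‖},
      (‖lam (v : V)‖₊ : ℝ≥0∞) ^ 2 / (‖S (lp.single 2 (v : V) (1 : ℂ))‖₊ : ℝ≥0∞) ^ 2 ≤ 1 := by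
  classical
  rw [ENNReal.tsum_eq_iSup_sum]
  refine iSup_le fun s => ?_
  set c : {v : V // T.E u v ∧ 0 < ‖S (lp.single 2 v (1:ℂ))‖} → ℂ :=
    fun w => lam ↑w / (((‖S (lp.single 2 (↑w:V) (1:ℂ))‖ ^ 2 : ℝ)) : ℂ) with hcdef
  set f : lp (fun _ : V => ℂ) 2 := ∑ w ∈ s, lp.single 2 (↑w:V) (c w) with hfdef
  set t : ℝ := ∑ w ∈ s, ‖lam ↑w‖ ^ 2 / ‖S (lp.single 2 (↑w:V) (1:ℂ))‖ ^ 2 with htdef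
  have ht0 : (0:ℝ) ≤ t := Finset.sum_nonneg fun w _ => by positivity
  have hf_mem : ∀ w ∈ s, f (↑w : V) = c w := by
    intro w hw
    rw [hfdef, lp.coeFn_sum, Finset.sum_apply]
    rw [Finset.sum_eq_single w]
    · exact lp.single_apply_self (E := fun _ : V => ℂ) 2 (↑w : V) (c w)
    · intro w' hw' hne
      exact lp.single_apply_ne (E := fun _ : V => ℂ) 2 (↑w' : V) (c w')
        (fun h => hne (Subtype.ext h.symm))
    · intro h
      exact absurd hw h
  have hf_nmem : ∀ x : V, (∀ w ∈ s, x ≠ (↑w : V)) → f x = 0 := by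
    intro x hx
    rw [hfdef, lp.coeFn_sum, Finset.sum_apply]
    refine Finset.sum_eq_zero fun w hw => ?_
    exact lp.single_apply_ne (E := fun _ : V => ℂ) 2 (↑w : V) (c w) (hx w hw)
  have hSeu : ∀ w : {v : V // T.E u v ∧ 0 < ‖S (lp.single 2 v (1:ℂ))‖},
      S (lp.single 2 u (1:ℂ)) (↑w : V) = lam ↑w := by
    intro w
    rw [apply_edge T lam S hS w.2.1]
    simp [lp.single_apply_self]
  have hinner : (@inner ℂ _ _ (S (lp.single 2 u (1:ℂ))) f : ℂ) = (t : ℂ) := by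
    rw [hfdef, inner_sum, htdef]
    push_cast
    refine Finset.sum_congr rfl fun w _ => ?_
    rw [lp.inner_single_right, hSeu w, RCLike.inner_apply, hcdef]
    beta_reduce
    rw [div_mul_eq_mul_div, RCLike.mul_conj]
    norm_num
  have ht_le : t ≤ ‖S f‖ := by
    have h5 : (@inner ℂ _ _ (lp.single 2 u (1:ℂ) : lp (fun _ : V => ℂ) 2)
        ((ContinuousLinearMap.adjoint S) f) : ℂ) = (t:ℂ) := by
      rw [ContinuousLinearMap.adjoint_inner_right]
      exact hinner
    have h6 : ‖(t:ℂ)‖ ≤ ‖(lp.single 2 u (1:ℂ) : lp (fun _ : V => ℂ) 2)‖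
        * ‖(ContinuousLinearMap.adjoint S) f‖ := h5 ▸ norm_inner_le_norm _ _
    rw [norm_single_one, one_mul] at h6
    have h8 : ‖(t:ℂ)‖ = t := by
      rw [Complex.norm_real]
      exact Real.norm_of_nonneg ht0
    rw [h8] at h6
    exact h6.trans (hyp f)
  have hterm : ∀ w ∈ s, (‖S (lp.single 2 (↑w:V) (1:ℂ))‖₊ : ℝ≥0∞) ^ 2 * (‖c w‖₊ : ℝ≥0∞) ^ 2
      = ENNReal.ofReal (‖lam ↑w‖ ^ 2 / ‖S (lp.single 2 (↑w:V) (1:ℂ))‖ ^ 2) := by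
    intro w _
    have hr : (0:ℝ) < ‖S (lp.single 2 (↑w:V) (1:ℂ))‖ := w.2.2
    have hc : ‖c w‖ = ‖lam ↑w‖ / ‖S (lp.single 2 (↑w:V) (1:ℂ))‖ ^ 2 := by
      rw [hcdef]
      simp only [norm_div, Complex.norm_real]
      rw [Real.norm_of_nonneg (by positivity)]
    rw [← enorm_eq_nnnorm, ← ofReal_norm, ← enorm_eq_nnnorm, ← ofReal_norm,
      ← ENNReal.ofReal_pow (norm_nonneg _), ← ENNReal.ofReal_pow (norm_nonneg _),
      ← ENNReal.ofReal_mul (by positivity), hc]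
    congr 1
    field_simp
  have hnormf : ‖S f‖ ^ 2 = t := by
    have h9 : (‖S f‖₊ : ℝ≥0∞) ^ 2 = ENNReal.ofReal t := by
      rw [normS_eq T lam S hS f]
      rw [tsum_eq_sum (s := Finset.image Subtype.val s)
        (fun x hx => by
          have hfx : f x = 0 := hf_nmem x (fun w hw hxw =>
            hx (Finset.mem_image.mpr ⟨w, hw, hxw.symm⟩))
          rw [hfx]
          simp)]
      rw [Finset.sum_image (fun a _ b _ h => Subtype.ext h)]
      rw [htdef, ENNReal.ofReal_sum_of_nonneg (fun w _ => by positivity)]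
      refine Finset.sum_congr rfl fun w hw => ?_
      rw [hf_mem w hw]
      exact hterm w hw
    have h10 := congrArg ENNReal.toReal h9
    rw [ENNReal.toReal_ofReal ht0] at h10
    rw [← h10, ENNReal.toReal_pow, ENNReal.coe_toReal, coe_nnnorm]
  have ht1 : t ≤ 1 := by
    have hsq : t ^ 2 ≤ t := by
      calc t ^ 2 = t * t := sq t
        _ ≤ ‖S f‖ * ‖S f‖ := mul_le_mul ht_le ht_le ht0 (norm_nonneg _)
        _ = ‖S f‖ ^ 2 := (sq _).symm
        _ = t := hnormf
    nlinarith [hsq, ht0]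
  calc ∑ w ∈ s, (‖lam (↑w:V)‖₊ : ℝ≥0∞) ^ 2 / (‖S (lp.single 2 (↑w:V) (1 : ℂ))‖₊ : ℝ≥0∞) ^ 2
      = ∑ w ∈ s, ENNReal.ofReal (‖lam ↑w‖ ^ 2 / ‖S (lp.single 2 (↑w:V) (1:ℂ))‖ ^ 2) := by
        refine Finset.sum_congr rfl fun w _ => ?_
        have hr : (0:ℝ) < ‖S (lp.single 2 (↑w:V) (1:ℂ))‖ := w.2.2
        rw [ENNReal.ofReal_div_of_pos (by positivity),
          ENNReal.ofReal_pow (norm_nonneg _), ENNReal.ofReal_pow (norm_nonneg _),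
          ofReal_norm, ofReal_norm, enorm_eq_nnnorm, enorm_eq_nnnorm]
    _ = ENNReal.ofReal t := by
        rw [htdef, ENNReal.ofReal_sum_of_nonneg (fun w _ => by positivity)]
    _ ≤ 1 := ENNReal.ofReal_le_one.mpr ht1

end Stmt18Aux

/-- A bounded weighted shift `S_λ` on a directed tree is hyponormal iff for every vertex `u`:
(a) every child `v` of `u` with `‖S_λ e_v‖ = 0` has `λ_v = 0`, and
(b) `Σ_{v ∈ Chi⁺(u)} |λ_v|² / ‖S_λ e_v‖² ≤ 1`, where `Chi⁺(u)` is the set of children `v`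
of `u` with `‖S_λ e_v‖ > 0`. -/

theorem stmt_18 {V : Type} [DecidableEq V] (T : DirectedTree V) (lam : V → ℂ)
    (S : lp (fun _ : V => ℂ) 2 →L[ℂ] lp (fun _ : V => ℂ) 2)
    (hS : ∀ (f : lp (fun _ : V => ℂ) 2) (v : V), S f v = lambdaT T lam ⇑f v) :
    (∀ f : lp (fun _ : V => ℂ) 2, ‖ContinuousLinearMap.adjoint S f‖ ≤ ‖S f‖) ↔
      ((∀ u v : V, T.E u v → ‖S (lp.single 2 v (1 : ℂ))‖ = 0 → lam v = 0) ∧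
        ∀ u : V,
          ∑' v : {v : V // T.E u v ∧ 0 < ‖S (lp.single 2 v (1 : ℂ))‖},
            (‖lam (v : V)‖₊ : ℝ≥0∞) ^ 2 / (‖S (lp.single 2 (v : V) (1 : ℂ))‖₊ : ℝ≥0∞) ^ 2
            ≤ 1) := by
  constructor
  · intro hyp
    exact ⟨fun u v huv h0 => fwd_a T lam S hS hyp u v huv h0,
      fun u => fwd_b T lam S hS hyp u⟩
  · rintro ⟨ha, hb⟩ f
    exact hypo_of T lam S hS ha hb f
end
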